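/- arXiv:2004.06921 — 6 statements merged into one kernel-verified Lean document; each statement's English description precedes it below -/
import Mathlib

section
/- The number of linear k-chord diagrams of length kn with at least j short chords (counted with multiplicity via choices of j disjoint short-chord placements), i.e., the sum over diagrams with exactly q ≥ j short chords of C(q, j), equals ((k(n-j))! / ((k!)^{n-j} (n-j)!)) · C(kn - j(k-1), j). -/
/-!
Marking `j` short chords of a diagram amounts to choosing `j` pairwise disjoint blocks of `k`
consecutive vertices in `[0, kn)` and then an arbitrary `k`-chord diagram on the remaining
`k(n - j)` vertices, independently. Diagrams on `kq` vertices number `(kq)! / ((k!)^q q!)`: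
removing the block of a fixed vertex leaves a diagram on `k(q - 1)` vertices, and that block can
be chosen in `C(kq - 1, k - 1)` ways. Families of `j` disjoint `k`-blocks in `[0, m)` number
`C(m - j(k - 1), j)`: both sides satisfy Pascal's rule, according to whether the last block
`[m - k, m)` is used.
-/

open Finset
open scoped Nat

namespace Finpartition

variable {α : Type*} [DecidableEq α] {s : Finset α} {T : Finset (Finset α)}

theorem sup_parts_sdiff (P : Finpartition s) (hT : T ⊆ P.parts) :
    (P.parts \ T).sup id = s \ T.sup id := by
  have hdisj : Disjoint ((P.parts \ T).sup id) (T.sup id) :=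
    P.supIndep.disjoint_sup_sup sdiff_subset hT disjoint_sdiff_self_left
  rw [← union_sdiff_cancel_right hdisj, ← sup_eq_union, ← sup_union, sdiff_union_of_subset hT,
    P.sup_parts]

def removeParts (P : Finpartition s) (hT : T ⊆ P.parts) : Finpartition (s \ T.sup id) :=
  P.ofSubset sdiff_subset (P.sup_parts_sdiff hT)

def addParts (Q : Finpartition (s \ T.sup id)) (hTs : T.sup id ⊆ s)
    (hT : (T : Set (Finset α)).PairwiseDisjoint id) (hne : ∅ ∉ T) : Finpartition s where
  parts := Q.parts ∪ T
  supIndep := by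
    rw [supIndep_iff_pairwiseDisjoint, coe_union]
    refine Q.disjoint.union hT fun B hB A hA _ => ?_
    exact disjoint_sdiff_self_left.mono (Q.le hB) (le_sup (f := id) hA)
  sup_parts := by rw [sup_union, Q.sup_parts, sdiff_sup_cancel hTs]
  bot_notMem := by
    rw [mem_union, not_or]
    exact ⟨Q.bot_notMem, hne⟩

theorem disjoint_parts_of_sdiff (Q : Finpartition (s \ T.sup id)) : Disjoint Q.parts T := by
  refine disjoint_left.2 fun B hBQ hBT => (Q.nonempty_of_mem_parts hBQ).ne_empty ?_
  exact subset_empty.1 fun x hx =>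
    ((mem_sdiff.1 (Q.le hBQ hx)).2 (le_sup (f := id) hBT hx)).elim

def subsetPartsEquiv (hTs : T.sup id ⊆ s) (hT : (T : Set (Finset α)).PairwiseDisjoint id)
    (hne : ∅ ∉ T) : {P : Finpartition s // T ⊆ P.parts} ≃ Finpartition (s \ T.sup id) where
  toFun P := P.1.removeParts P.2
  invFun Q := ⟨Q.addParts hTs hT hne, subset_union_right⟩
  left_inv P := Subtype.ext <| Finpartition.ext <| sdiff_union_of_subset P.2
  right_inv Q := Finpartition.ext <| union_sdiff_cancel_right Q.disjoint_parts_of_sdiff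

theorem erase_part_eq_iff (P : Finpartition s) {x : α} {C : Finset α} (hx : x ∈ s)
    (hxC : x ∉ C) : (P.part x).erase x = C ↔ insert x C ∈ P.parts := by
  constructor
  · rintro rfl
    rw [insert_erase (P.mem_part_self.2 hx)]
    exact P.part_mem.2 hx
  · intro h
    rw [P.part_eq_of_mem h (mem_insert_self x C), erase_insert hxC]

end Finpartition

theorem Finset.card_sup_id_of_pairwiseDisjoint {α : Type*} [DecidableEq α]
    {T : Finset (Finset α)} {k : ℕ} (hT : (T : Set (Finset α)).PairwiseDisjoint id)
    (hTk : ∀ A ∈ T, A.card = k) : (T.sup id).card = T.card * k := by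
  rw [sup_eq_biUnion, card_biUnion hT]
  exact sum_const_nat hTk

theorem Nat.card_mul_eq_of_card_fiber_mul {X Y : Type*} [Fintype Y] (f : X → Y)
    (hfin : ∀ y, Finite {x // f x = y}) {d e : ℕ} (h : ∀ y, Nat.card {x // f x = y} * d = e) :
    Nat.card X * d = Fintype.card Y * e := by
  rw [Nat.card_congr (Equiv.sigmaFiberEquiv f).symm, Nat.card_sigma, sum_mul]
  simp [h]

theorem Nat.choose_mul_factorial_mul_succ (r q : ℕ) :
    ((r + 1) * (q + 1) - 1).choose r * ((r + 1) * q)! * ((r + 1)! * (q + 1)) =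
      ((r + 1) * (q + 1))! := by
  have h := Nat.add_choose_mul_factorial_mul_factorial ((r + 1) * q) r
  rw [show (r + 1) * (q + 1) - 1 = (r + 1) * q + r by ring_nf; omega,
    show (r + 1) * (q + 1) = (r + 1) * q + r + 1 by ring, Nat.factorial_succ ((r + 1) * q + r),
    ← h, Nat.factorial_succ]
  ring

section UniformPartitions

variable {α : Type*} [DecidableEq α] {k : ℕ}

theorem card_uniform_finpartition_of_subset_parts (hk : 0 < k) {s : Finset α}
    {T : Finset (Finset α)} (hTs : T.sup id ⊆ s) (hT : (T : Set (Finset α)).PairwiseDisjoint id)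
    (hTk : ∀ A ∈ T, A.card = k) :
    Nat.card {P : Finpartition s // T ⊆ P.parts ∧ ∀ B ∈ P.parts, B.card = k} =
      Nat.card {Q : Finpartition (s \ T.sup id) // ∀ B ∈ Q.parts, B.card = k} := by
  have hne : ∅ ∉ T := fun h => by simpa using (hTk ∅ h).symm.trans_lt hk
  refine Nat.card_congr <| (Equiv.subtypeSubtypeEquivSubtypeInter _ _).symm.trans <|
    (Finpartition.subsetPartsEquiv hTs hT hne).subtypeEquiv fun P => ?_
  refine ⟨fun h B hB => h B (mem_sdiff.1 hB).1, fun h B hB => ?_⟩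
  by_cases hBT : B ∈ T
  · exact hTk B hBT
  · exact h B (mem_sdiff.2 ⟨hB, hBT⟩)

theorem card_uniform_finpartition_mul (hk : 0 < k) (q : ℕ) (s : Finset α) (hs : s.card = k * q) :
    Nat.card {P : Finpartition s // ∀ B ∈ P.parts, B.card = k} * (k ! ^ q * q !) = (k * q)! := by
  induction q generalizing s with
  | zero =>
    rw [mul_zero, card_eq_zero] at hs
    subst hs
    have hall : ∀ P : Finpartition (∅ : Finset α), ∀ B ∈ P.parts, B.card = k := fun P B hB => by
      simp [P.parts_eq_empty_iff.2 rfl] at hB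
    have : Unique (Finpartition (∅ : Finset α)) := inferInstanceAs (Unique (Finpartition ⊥))
    rw [Nat.card_congr (Equiv.subtypeUnivEquiv hall), Nat.card_unique]
    simp
  | succ q ih =>
    obtain ⟨x, hx⟩ : s.Nonempty := card_pos.1 (by rw [hs]; positivity)
    let f : {P : Finpartition s // ∀ B ∈ P.parts, B.card = k} → (s.erase x).powersetCard (k - 1) :=
      fun P => ⟨(P.1.part x).erase x, mem_powersetCard.2 ⟨erase_subset_erase _ (P.1.part_subset x),
        by rw [card_erase_of_mem (P.1.mem_part_self.2 hx), P.2 _ (P.1.part_mem.2 hx)]⟩⟩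
    have hfiber : ∀ C, Nat.card {P // f P = C} * (k ! ^ q * q !) = (k * q)! := by
      rintro ⟨C, hC⟩
      obtain ⟨hCs, hCk⟩ := mem_powersetCard.1 hC
      have hxC : x ∉ C := fun h => (mem_erase.1 (hCs h)).1 rfl
      have hBs : insert x C ⊆ s := insert_subset hx (hCs.trans (erase_subset x s))
      have hBk : (insert x C).card = k := by rw [card_insert_of_notMem hxC, hCk]; omega
      have e : {P // f P = ⟨C, hC⟩} ≃
          {P : Finpartition s // {insert x C} ⊆ P.parts ∧ ∀ B ∈ P.parts, B.card = k} :=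
        (Equiv.subtypeEquivRight fun P => Subtype.ext_iff).trans <|
          (Equiv.subtypeSubtypeEquivSubtypeInter _ fun P : Finpartition s =>
            (P.part x).erase x = C).trans <|
            Equiv.subtypeEquivRight fun P => by
              rw [singleton_subset_iff, P.erase_part_eq_iff hx hxC, and_comm]
      rw [Nat.card_congr e, card_uniform_finpartition_of_subset_parts hk (by simpa using hBs)
        (by simp) (by simpa using hBk)]
      refine ih _ ?_
      rw [sup_singleton, id, card_sdiff_of_subset hBs, hBk, hs, Nat.mul_succ, Nat.add_sub_cancel]
    have hcount := Nat.card_mul_eq_of_card_fiber_mul f (fun _ => Finite.of_fintype _) hfiber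
    rw [Fintype.card_coe, card_powersetCard, card_erase_of_mem hx, hs] at hcount
    obtain ⟨r, rfl⟩ : ∃ r, k = r + 1 := ⟨k - 1, by omega⟩
    rw [Nat.add_sub_cancel] at hcount
    rw [← Nat.choose_mul_factorial_mul_succ, ← hcount, pow_succ, Nat.factorial_succ q]
    ring

end UniformPartitions

theorem Finset.disjoint_Ico_add_iff {i i' k : ℕ} :
    Disjoint (Ico i (i + k)) (Ico i' (i' + k)) ↔ k = 0 ∨ i + k ≤ i' ∨ i' + k ≤ i := by
  rw [← disjoint_coe, coe_Ico, coe_Ico, Set.Ico_disjoint_Ico]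
  omega

theorem Finset.Ico_add_inj {i i' k : ℕ} (hk : 0 < k) :
    Ico i (i + k) = Ico i' (i' + k) ↔ i = i' := by
  rw [← coe_inj, coe_Ico, coe_Ico, Set.Ico_eq_Ico_iff (Or.inl (by omega))]
  omega

theorem Finset.Ico_add_subset_range_iff {i k m : ℕ} (hk : 0 < k) :
    Ico i (i + k) ⊆ range m ↔ i + k ≤ m := by
  rw [range_eq_Ico, Ico_subset_Ico_iff (by omega)]
  omega

open Classical in
noncomputable def intervalPackings (k m j : ℕ) : Finset (Finset (Finset ℕ)) :=
  ((range m).powerset.powersetCard j).filter fun I =>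
    (I : Set (Finset ℕ)).PairwiseDisjoint id ∧ ∀ A ∈ I, ∃ i, i + k ≤ m ∧ A = Ico i (i + k)

theorem mem_intervalPackings {k m j : ℕ} {I : Finset (Finset ℕ)} :
    I ∈ intervalPackings k m j ↔ I.card = j ∧ (I : Set (Finset ℕ)).PairwiseDisjoint id ∧
      ∀ A ∈ I, ∃ i, i + k ≤ m ∧ A = Ico i (i + k) := by
  classical
  simp only [intervalPackings, mem_filter, mem_powersetCard, and_assoc,
    and_iff_right_iff_imp]
  rintro ⟨-, -, hI⟩ A hA
  obtain ⟨i, hi, rfl⟩ := hI A hA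
  rw [mem_powerset, range_eq_Ico]
  exact Ico_subset_Ico (Nat.zero_le _) hi

theorem intervalPackings_zero (k m : ℕ) : intervalPackings k m 0 = {∅} := by
  ext I
  simp +contextual [mem_intervalPackings, card_eq_zero]

theorem intervalPackings_succ_of_lt {k m : ℕ} (hm : m < k) (j : ℕ) :
    intervalPackings k m (j + 1) = ∅ := by
  refine eq_empty_of_forall_notMem fun I hI => ?_
  obtain ⟨hcard, -, hI⟩ := mem_intervalPackings.1 hI
  obtain ⟨A, hA⟩ : I.Nonempty := card_pos.1 (by omega)
  obtain ⟨i, hi, -⟩ := hI A hA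
  omega

section LastInterval

variable {k l : ℕ} (hk : 0 < k)
include hk

theorem Ico_notMem_intervalPackings {j : ℕ} {I : Finset (Finset ℕ)}
    (hI : I ∈ intervalPackings k l j) : Ico l (l + k) ∉ I := fun hL => by
  obtain ⟨i, hi, hiL⟩ := (mem_intervalPackings.1 hI).2.2 _ hL
  have := (Ico_add_inj hk).1 hiL.symm
  omega

theorem filter_last_notMem_intervalPackings (j : ℕ) :
    (intervalPackings k (l + k) j).filter (Ico l (l + k) ∉ ·) =
      intervalPackings k (l + k - 1) j := by
  ext I
  simp only [mem_filter, mem_intervalPackings]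
  constructor
  · rintro ⟨⟨hcard, hdisj, hI⟩, hL⟩
    refine ⟨hcard, hdisj, fun A hA => ?_⟩
    obtain ⟨i, hi, rfl⟩ := hI A hA
    have : i ≠ l := fun h => hL (h ▸ hA)
    exact ⟨i, by omega, rfl⟩
  · rintro ⟨hcard, hdisj, hI⟩
    refine ⟨⟨hcard, hdisj, fun A hA => ?_⟩, fun hL => ?_⟩
    · obtain ⟨i, hi, rfl⟩ := hI A hA
      exact ⟨i, by omega, rfl⟩
    · obtain ⟨i, hi, hiL⟩ := hI _ hL
      have := (Ico_add_inj hk).1 hiL.symm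
      omega

theorem card_filter_last_mem_intervalPackings (j : ℕ) :
    ((intervalPackings k (l + k) (j + 1)).filter (Ico l (l + k) ∈ ·)).card =
      (intervalPackings k l j).card := by
  refine card_nbij' (·.erase (Ico l (l + k))) (insert (Ico l (l + k))) ?_ ?_ ?_ ?_
  · intro I hI
    rw [mem_coe, mem_filter, mem_intervalPackings] at hI
    obtain ⟨⟨hcard, hdisj, hI⟩, hL⟩ := hI
    refine mem_intervalPackings.2 ⟨by rw [card_erase_of_mem hL, hcard, Nat.add_sub_cancel],
      hdisj.subset (coe_subset.2 (erase_subset _ _)), fun A hA => ?_⟩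
    obtain ⟨hAL, hA⟩ := mem_erase.1 hA
    obtain ⟨i, hi, rfl⟩ := hI A hA
    have := disjoint_Ico_add_iff.1 (hdisj hA hL hAL)
    exact ⟨i, by omega, rfl⟩
  · intro I hI'
    obtain ⟨hcard, hdisj, hI⟩ := mem_intervalPackings.1 (mem_coe.1 hI')
    refine mem_filter.2 ⟨mem_intervalPackings.2 ⟨?_, ?_, ?_⟩, mem_insert_self _ _⟩
    · rw [card_insert_of_notMem (Ico_notMem_intervalPackings hk hI'), hcard]
    · rw [coe_insert, Set.pairwiseDisjoint_insert]
      refine ⟨hdisj, fun A hA _ => ?_⟩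
      obtain ⟨i, hi, rfl⟩ := hI A hA
      exact disjoint_Ico_add_iff.2 (by omega)
    · intro A hA
      rcases mem_insert.1 hA with rfl | hA
      · exact ⟨l, le_rfl, rfl⟩
      · obtain ⟨i, hi, rfl⟩ := hI A hA
        exact ⟨i, by omega, rfl⟩
  · intro I hI
    exact insert_erase (mem_filter.1 (mem_coe.1 hI)).2
  · intro I hI
    exact erase_insert (Ico_notMem_intervalPackings hk (mem_coe.1 hI))

end LastInterval

theorem choose_sub_mul_pred_succ {k l : ℕ} (hk : 0 < k) (j : ℕ) :
    (l + k - (j + 1) * (k - 1)).choose (j + 1) =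
      (l + k - 1 - (j + 1) * (k - 1)).choose (j + 1) + (l - j * (k - 1)).choose j := by
  have hmul : (j + 1) * (k - 1) = j * (k - 1) + (k - 1) := by ring
  generalize j * (k - 1) = t at hmul
  rw [hmul]
  obtain h | ⟨b, hb⟩ : l + k - (t + (k - 1)) = 0 ∨ ∃ b, l + k - (t + (k - 1)) = b + 1 :=
    (l + k - (t + (k - 1))).eq_zero_or_eq_succ_pred.imp_right fun h => ⟨_, h⟩
  · have hj : j ≠ 0 := by rintro rfl; omega
    rw [h, show l + k - 1 - (t + (k - 1)) = 0 by omega, show l - t = 0 by omega,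
      Nat.choose_eq_zero_of_lt j.succ_pos, Nat.choose_eq_zero_of_lt (Nat.pos_of_ne_zero hj)]
  · rw [hb, show l + k - 1 - (t + (k - 1)) = b by omega, show l - t = b by omega,
      Nat.choose_succ_succ', add_comm]

theorem card_intervalPackings {k : ℕ} (hk : 0 < k) (m j : ℕ) :
    (intervalPackings k m j).card = (m - j * (k - 1)).choose j := by
  induction m using Nat.strong_induction_on generalizing j with
  | _ m ih =>
  rcases j with _ | j
  · simp [intervalPackings_zero]
  rcases lt_or_ge m k with hm | hm
  · rw [intervalPackings_succ_of_lt hm, card_empty, Nat.choose_eq_zero_of_lt]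
    have : k - 1 ≤ (j + 1) * (k - 1) := Nat.le_mul_of_pos_left _ j.succ_pos
    omega
  obtain ⟨l, rfl⟩ := Nat.exists_eq_add_of_le' hm
  rw [← card_filter_add_card_filter_not (Ico l (l + k) ∈ ·),
    card_filter_last_mem_intervalPackings hk, filter_last_notMem_intervalPackings hk,
    ih _ (by omega), ih _ (by omega), choose_sub_mul_pred_succ hk, add_comm]

abbrev DiagramWithShortChords (k n j : ℕ) :=
  {PS : Finpartition (range (k * n)) × Finset (Finset ℕ) //
    (∀ B ∈ PS.1.parts, B.card = k) ∧ PS.2 ⊆ PS.1.parts ∧ PS.2.card = j ∧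
      ∀ A ∈ PS.2, ∃ i, A = Ico i (i + k)}

namespace DiagramWithShortChords

variable {k n j : ℕ} (hk : 0 < k)
include hk

def shortChords (PS : DiagramWithShortChords k n j) : intervalPackings k (k * n) j :=
  ⟨PS.1.2, mem_intervalPackings.2 ⟨PS.2.2.2.1, PS.1.1.disjoint.subset (coe_subset.2 PS.2.2.1),
    fun A hA => by
      obtain ⟨i, rfl⟩ := PS.2.2.2.2 A hA
      exact ⟨i, (Ico_add_subset_range_iff hk).1 (PS.1.1.le (PS.2.2.1 hA)), rfl⟩⟩⟩

def fiberShortChordsEquiv (T : intervalPackings k (k * n) j) :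
    {PS // shortChords hk PS = T} ≃
      {P : Finpartition (range (k * n)) // T.1 ⊆ P.parts ∧ ∀ B ∈ P.parts, B.card = k} where
  toFun PS := ⟨PS.1.1.1, (show PS.1.1.2 = T.1 from congrArg Subtype.val PS.2) ▸ PS.1.2.2.1,
    PS.1.2.1⟩
  invFun P :=
    have hT := mem_intervalPackings.1 T.2
    ⟨⟨(P.1, T.1), P.2.2, P.2.1, hT.1, fun A hA => (hT.2.2 A hA).imp fun _ => And.right⟩, rfl⟩
  left_inv PS := Subtype.ext <| Subtype.ext <| Prod.ext rfl (congrArg Subtype.val PS.2).symm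
  right_inv _ := rfl

theorem card_fiber_shortChords_mul (T : intervalPackings k (k * n) j) :
    Nat.card {PS // shortChords hk PS = T} * (k ! ^ (n - j) * (n - j)!) = (k * (n - j))! := by
  obtain ⟨hTcard, hTdisj, hTint⟩ := mem_intervalPackings.1 T.2
  have hTs : T.1.sup id ⊆ range (k * n) := Finset.sup_le fun A hA => by
    obtain ⟨i, hi, rfl⟩ := hTint A hA
    exact (Ico_add_subset_range_iff hk).2 hi
  have hTk : ∀ A ∈ T.1, A.card = k := fun A hA => by
    obtain ⟨i, -, rfl⟩ := hTint A hA
    simp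
  rw [Nat.card_congr (fiberShortChordsEquiv hk T),
    card_uniform_finpartition_of_subset_parts hk hTs hTdisj hTk]
  refine card_uniform_finpartition_mul hk _ _ ?_
  rw [card_sdiff_of_subset hTs, card_range, card_sup_id_of_pairwiseDisjoint hTdisj hTk, hTcard,
    Nat.mul_sub, mul_comm j]

end DiagramWithShortChords

theorem stmt2_general (k n j : ℕ) (hk : 1 ≤ k) :
    Nat.card {PS : Finpartition (Finset.range (k * n)) × Finset (Finset ℕ) //
        (∀ B ∈ PS.1.parts, B.card = k) ∧
        PS.2 ⊆ PS.1.parts ∧ PS.2.card = j ∧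
        ∀ A ∈ PS.2, ∃ i, A = Finset.Ico i (i + k)} *
      (Nat.factorial k ^ (n - j) * Nat.factorial (n - j))
    = Nat.factorial (k * (n - j)) * Nat.choose (k * n - j * (k - 1)) j := by
  rw [Nat.card_mul_eq_of_card_fiber_mul (DiagramWithShortChords.shortChords hk)
      (fun T => Finite.of_equiv _ (DiagramWithShortChords.fiberShortChordsEquiv hk T).symm)
      (DiagramWithShortChords.card_fiber_shortChords_mul hk),
    Fintype.card_coe, card_intervalPackings hk, mul_comm]

/-- Counting pairs (linear `k`-chord diagram of length `k*n`, set of `j` short chords of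
that diagram): the total equals `((k(n-j))! / ((k!)^{n-j} (n-j)!)) * C(kn - j(k-1), j)`,
stated in multiplied form. A short chord is a block of `k` consecutive vertices. -/
theorem stmt2 (k n j : ℕ) (hk : 1 ≤ k) (hj : j ≤ n) :
    Nat.card {PS : Finpartition (Finset.range (k * n)) × Finset (Finset ℕ) //
        (∀ B ∈ PS.1.parts, B.card = k) ∧
        PS.2 ⊆ PS.1.parts ∧ PS.2.card = j ∧
        ∀ A ∈ PS.2, ∃ i, A = Finset.Ico i (i + k)} *
      (Nat.factorial k ^ (n - j) * Nat.factorial (n - j))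
    = Nat.factorial (k * (n - j)) * Nat.choose (k * n - j * (k - 1)) j :=
  stmt2_general k n j hk
end

section
/- The number of linear k-chord diagrams of length kn with no short chord equals the alternating sum over j from 0 to n of (-1)^j · ((k(n-j))! / ((k!)^{n-j} (n-j)!)) · C(kn - j(k-1), j). -/
/-!
Inclusion–exclusion over the short chords. A set `J` of `j` short chords is contained in some
diagram only if its chords are pairwise disjoint, and then the diagrams containing `J` are the
`k`-uniform partitions of the `k(n-j)` points that `J` leaves, of which there are
`(k(n-j))! / ((k!)^(n-j) (n-j)!)` (peel off the block through a fixed point and induct).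
Sets of `j` pairwise disjoint short chords in `{0, …, m-1}` number `C(m - j(k-1), j)`:
according to whether the last possible chord is used, they satisfy Pascal's recurrence.
-/

open Finset Nat

theorem choose_mul_factorial_mul_eq_factorial {k : ℕ} (hk : 0 < k) (r : ℕ) :
    (k * r + k - 1).choose (k - 1) * (k * r)! * (k ! * (r + 1)) = (k * (r + 1))! := by
  obtain ⟨k, rfl⟩ := Nat.exists_eq_add_one_of_ne_zero hk.ne'
  have h := add_choose_mul_factorial_mul_factorial ((k + 1) * r) k
  rw [show (k + 1) * r + (k + 1) - 1 = (k + 1) * r + k by omega, add_tsub_cancel_right,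
    show (k + 1) * (r + 1) = (k + 1) * r + k + 1 by ring, factorial_succ ((k + 1) * r + k), ← h,
    factorial_succ k]
  ring

theorem card_filter_eq_empty_eq_alternating_sum {β γ : Type*} [DecidableEq γ] (Ω : Finset β)
    (f : β → Finset γ) {n : ℕ} (hn : ∀ a ∈ Ω, #(f a) ≤ n) :
    (#{a ∈ Ω | f a = ∅} : ℤ) =
      ∑ j ∈ range (n + 1), (-1) ^ j * ∑ a ∈ Ω, (#((f a).powersetCard j) : ℤ) := by
  have hgroup : ∀ a ∈ Ω, ∑ J ∈ (f a).powerset, (-1 : ℤ) ^ #J =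
      ∑ j ∈ range (n + 1), (-1) ^ j * (#((f a).powersetCard j) : ℤ) := by
    intro a ha
    rw [← sum_fiberwise_of_maps_to (g := card) (t := range (n + 1)) fun J hJ =>
      mem_range_succ_iff.2 ((card_le_card (mem_powerset.1 hJ)).trans (hn a ha))]
    refine sum_congr rfl fun j _ => ?_
    rw [← powersetCard_eq_filter,
      sum_congr rfl fun J hJ => by rw [(mem_powersetCard.1 hJ).2], sum_const, nsmul_eq_mul,
      mul_comm]
  calc (#{a ∈ Ω | f a = ∅} : ℤ)
        = ∑ a ∈ Ω, ∑ J ∈ (f a).powerset, (-1 : ℤ) ^ #J := by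
        simp only [sum_powerset_neg_one_pow_card, ← sum_boole]
    _ = ∑ j ∈ range (n + 1), (-1) ^ j * ∑ a ∈ Ω, (#((f a).powersetCard j) : ℤ) := by
        rw [sum_congr rfl hgroup, sum_comm]
        simp only [mul_sum]

theorem sum_card_powersetCard_inter {β : Type*} [DecidableEq β] (Ω : Finset (Finset β))
    (C : Finset β) (j : ℕ) :
    ∑ R ∈ Ω, #((R ∩ C).powersetCard j) =
      ∑ J ∈ C.powersetCard j, #{R ∈ Ω | J ⊆ R} := by
  have h : ∀ R, (R ∩ C).powersetCard j = {J ∈ C.powersetCard j | J ⊆ R} := by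
    intro R
    ext J
    simp only [mem_powersetCard, subset_inter_iff, mem_filter]
    tauto
  simp only [h, card_filter]
  exact sum_comm

section UniformPartitions

variable {α : Type*} [DecidableEq α]

open Classical in
noncomputable def uniformPartitions (k : ℕ) (s : Finset α) : Finset (Finset (Finset α)) :=
  s.powerset.powerset.filter fun R =>
    R.sup id = s ∧ (R : Set (Finset α)).PairwiseDisjoint id ∧ ∀ B ∈ R, #B = k

variable {k : ℕ} {s : Finset α} {R J : Finset (Finset α)}

theorem mem_uniformPartitions :
    R ∈ uniformPartitions k s ↔
      R.sup id = s ∧ (R : Set (Finset α)).PairwiseDisjoint id ∧ ∀ B ∈ R, #B = k := by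
  simp only [uniformPartitions, mem_filter, mem_powerset, and_iff_right_iff_imp]
  rintro ⟨rfl, -, -⟩ B hB
  exact mem_powerset.2 (le_sup (f := id) hB)

theorem subset_of_mem_uniformPartitions (hR : R ∈ uniformPartitions k s) {B : Finset α}
    (hB : B ∈ R) : B ⊆ s :=
  (mem_uniformPartitions.1 hR).1 ▸ le_sup (f := id) hB

theorem card_sup_id_of_pairwiseDisjoint (hJ : (J : Set (Finset α)).PairwiseDisjoint id)
    (hk : ∀ B ∈ J, #B = k) : #(J.sup id) = k * #J := by
  rw [sup_eq_biUnion, card_biUnion hJ]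
  simp only [id_eq, sum_congr rfl hk, sum_const, smul_eq_mul, mul_comm]

theorem card_eq_mul_card_of_mem_uniformPartitions (hR : R ∈ uniformPartitions k s) :
    #s = k * #R := by
  obtain ⟨rfl, hdisj, hk⟩ := mem_uniformPartitions.1 hR
  exact card_sup_id_of_pairwiseDisjoint hdisj hk

theorem sup_sdiff_of_pairwiseDisjoint (hR : (R : Set (Finset α)).PairwiseDisjoint id)
    (hJ : J ⊆ R) : (R \ J).sup id = R.sup id \ J.sup id := by
  have hdisj : Disjoint ((R \ J).sup id) (J.sup id) := by
    refine Finset.disjoint_sup_left.2 fun B hB => Finset.disjoint_sup_right.2 fun C hC => ?_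
    obtain ⟨hBR, hBJ⟩ := mem_sdiff.1 hB
    exact hR hBR (hJ hC) (ne_of_mem_of_not_mem hC hBJ).symm
  calc (R \ J).sup id = ((R \ J).sup id ∪ J.sup id) \ J.sup id :=
        (union_sdiff_cancel_right hdisj).symm
    _ = R.sup id \ J.sup id := by rw [← sup_eq_union, ← sup_union, sdiff_union_of_subset hJ]

theorem card_filter_superset_uniformPartitions (hk : 0 < k)
    (hJ : (J : Set (Finset α)).PairwiseDisjoint id) (hJk : ∀ B ∈ J, #B = k)
    (hJs : J.sup id ⊆ s) :
    #{R ∈ uniformPartitions k s | J ⊆ R} = #(uniformPartitions k (s \ J.sup id)) := by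
  refine card_nbij' (· \ J) (· ∪ J) (fun R hR => ?_) (fun R hR => ?_) (fun R hR => ?_)
    (fun R hR => ?_)
  · obtain ⟨hRs, hJR⟩ := mem_filter.1 hR
    obtain ⟨hsup, hdisj, hcard⟩ := mem_uniformPartitions.1 hRs
    exact mem_uniformPartitions.2 ⟨by rw [sup_sdiff_of_pairwiseDisjoint hdisj hJR, hsup],
      hdisj.subset (coe_subset.2 sdiff_subset), fun B hB => hcard B (mem_sdiff.1 hB).1⟩
  · obtain ⟨hsup, hdisj, hcard⟩ := mem_uniformPartitions.1 (mem_coe.1 hR)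
    refine mem_filter.2 ⟨mem_uniformPartitions.2 ⟨?_, ?_, ?_⟩, subset_union_right⟩
    · rw [sup_union, hsup, sup_eq_union, sdiff_union_of_subset hJs]
    · rw [coe_union, Set.pairwiseDisjoint_union]
      refine ⟨hdisj, hJ, fun B hB C hC _ => ?_⟩
      exact disjoint_sdiff_self_left.mono (hsup ▸ le_sup (f := id) hB) (le_sup (f := id) hC)
    · intro B hB
      rcases mem_union.1 hB with hB | hB
      exacts [hcard B hB, hJk B hB]
  · exact sdiff_union_of_subset (mem_filter.1 hR).2
  · refine union_sdiff_cancel_right (disjoint_left.2 fun B hBR hBJ => ?_)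
    obtain ⟨x, hx⟩ := card_pos.1 ((hJk B hBJ).symm ▸ hk)
    have hxs := subset_of_mem_uniformPartitions (mem_coe.1 hR) hBR hx
    exact (mem_sdiff.1 hxs).2 (le_sup (f := id) hBJ hx)

theorem uniformPartitions_empty (hk : 0 < k) : uniformPartitions k (∅ : Finset α) = {∅} := by
  refine eq_singleton_iff_unique_mem.2 ⟨mem_uniformPartitions.2 (by simp), fun R hR => ?_⟩
  refine eq_empty_of_forall_notMem fun B hB => ?_
  have hB0 := subset_empty.1 (subset_of_mem_uniformPartitions hR hB)
  have := (mem_uniformPartitions.1 hR).2.2 B hB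
  simp [hB0] at this
  omega

theorem card_uniformPartitions_mul (hk : 0 < k) {r : ℕ} (hs : #s = k * r) :
    #(uniformPartitions k s) * (k ! ^ r * r !) = (k * r)! := by
  induction r generalizing s with
  | zero =>
    rw [mul_zero, Finset.card_eq_zero] at hs
    simp [hs, uniformPartitions_empty hk]
  | succ r ih =>
    obtain ⟨x, hx⟩ : s.Nonempty := card_pos.1 (by rw [hs]; positivity)
    set T := (s.powersetCard k).filter ({x} ⊆ ·)
    set fiber : Finset α → Finset (Finset (Finset α)) :=
      fun B => {R ∈ uniformPartitions k s | {B} ⊆ R}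
    have hcover : uniformPartitions k s = T.biUnion fiber := by
      ext R
      simp only [fiber, mem_biUnion, mem_filter, T, mem_powersetCard, singleton_subset_iff]
      refine ⟨fun hR => ?_, fun ⟨_, _, hR, _⟩ => hR⟩
      obtain ⟨B, hBR, hxB⟩ := mem_sup.1 ((mem_uniformPartitions.1 hR).1 ▸ hx)
      exact ⟨B, ⟨⟨subset_of_mem_uniformPartitions hR hBR,
        (mem_uniformPartitions.1 hR).2.2 B hBR⟩, hxB⟩, hR, hBR⟩
    have hdisj : (T : Set (Finset α)).PairwiseDisjoint fiber := by
      intro B hB C hC hBC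
      refine disjoint_left.2 fun R hRB hRC => ?_
      simp only [fiber, T, mem_filter, singleton_subset_iff, mem_coe] at hRB hRC hB hC
      exact disjoint_left.1 ((mem_uniformPartitions.1 hRB.1).2.1 hRB.2 hRC.2 hBC) hB.2 hC.2
    have hfiber : ∀ B ∈ T, #(fiber B) * (k ! ^ r * r !) = (k * r)! := by
      intro B hB
      simp only [T, mem_filter, mem_powersetCard] at hB
      rw [card_filter_superset_uniformPartitions hk (by simp) (by simpa using hB.1.2)
        (by simpa using hB.1.1)]
      refine ih ?_
      rw [sup_singleton, id, card_sdiff_of_subset hB.1.1, hs, hB.1.2, Nat.mul_succ,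
        add_tsub_cancel_right]
    have hT : #T = (k * r + k - 1).choose (k - 1) := by
      rw [card_filter_powersetCard_subset _ _ _ (singleton_subset_iff.2 hx)
        (by rw [card_singleton]; exact hk), hs, card_singleton, Nat.mul_succ]
    calc #(uniformPartitions k s) * (k ! ^ (r + 1) * (r + 1)!)
        = ∑ B ∈ T, #(fiber B) * (k ! ^ r * r !) * (k ! * (r + 1)) := by
          rw [hcover, card_biUnion hdisj, sum_mul]
          refine sum_congr rfl fun B _ => ?_
          rw [pow_succ, factorial_succ]
          ring
      _ = (k * (r + 1))! := by
          rw [sum_congr rfl fun B hB => by rw [hfiber B hB], sum_const, smul_eq_mul, hT,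
            ← mul_assoc, choose_mul_factorial_mul_eq_factorial hk]

theorem card_uniformPartitions (hk : 0 < k) {r : ℕ} (hs : #s = k * r) :
    #(uniformPartitions k s) = (k * r)! / (k ! ^ r * r !) :=
  (Nat.div_eq_of_eq_mul_left (by positivity) (card_uniformPartitions_mul hk hs).symm).symm

def uniformFinpartitionEquiv (hk : 0 < k) (s : Finset α) (q : Finset (Finset α) → Prop) :
    {P : Finpartition s // (∀ B ∈ P.parts, #B = k) ∧ q P.parts} ≃
      {R // R ∈ uniformPartitions k s ∧ q R} where
  toFun P :=
    ⟨P.1.parts, mem_uniformPartitions.2 ⟨P.1.sup_parts, P.1.disjoint, P.2.1⟩, P.2.2⟩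
  invFun R :=
    ⟨{ parts := R.1
       supIndep := supIndep_iff_pairwiseDisjoint.2 (mem_uniformPartitions.1 R.2.1).2.1
       sup_parts := (mem_uniformPartitions.1 R.2.1).1
       bot_notMem := fun h => by
        simpa [hk.ne] using (mem_uniformPartitions.1 R.2.1).2.2 _ h },
      (mem_uniformPartitions.1 R.2.1).2.2, R.2.2⟩
  left_inv _ := rfl
  right_inv _ := rfl

end UniformPartitions

section ShortChords

open Classical in
noncomputable def shortChords (k m : ℕ) : Finset (Finset ℕ) :=
  (range m).powerset.filter fun B => ∃ i, B = Ico i (i + k)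

open Classical in
noncomputable def disjointShortChords (k m j : ℕ) : Finset (Finset (Finset ℕ)) :=
  ((shortChords k m).powersetCard j).filter fun J => (J : Set (Finset ℕ)).PairwiseDisjoint id

variable {k m j : ℕ} {B : Finset ℕ} {J : Finset (Finset ℕ)}

theorem mem_shortChords : B ∈ shortChords k m ↔ B ⊆ range m ∧ ∃ i, B = Ico i (i + k) := by
  simp [shortChords]

theorem mem_disjointShortChords :
    J ∈ disjointShortChords k m j ↔
      J ⊆ shortChords k m ∧ #J = j ∧ (J : Set (Finset ℕ)).PairwiseDisjoint id := by
  simp [disjointShortChords, and_assoc]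

theorem shortChords_mono {m' : ℕ} (h : m ≤ m') : shortChords k m ⊆ shortChords k m' :=
  fun _ hB => mem_shortChords.2 ⟨(mem_shortChords.1 hB).1.trans (range_subset_range.2 h),
    (mem_shortChords.1 hB).2⟩

theorem inter_shortChords_eq_empty_iff {R : Finset (Finset ℕ)}
    (hR : R ∈ uniformPartitions k (range m)) :
    R ∩ shortChords k m = ∅ ↔ ∀ B ∈ R, ¬ ∃ i, B = Ico i (i + k) := by
  simp only [← disjoint_iff_inter_eq_empty, disjoint_left, mem_shortChords]
  exact forall₂_congr fun B hB => by simp [subset_of_mem_uniformPartitions hR hB]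

theorem card_sup_id_of_mem_disjointShortChords (hJ : J ∈ disjointShortChords k m j) :
    #(J.sup id) = k * j := by
  obtain ⟨hJC, hJj, hdisj⟩ := mem_disjointShortChords.1 hJ
  refine hJj ▸ card_sup_id_of_pairwiseDisjoint hdisj fun B hB => ?_
  obtain ⟨i, rfl⟩ := (mem_shortChords.1 (hJC hB)).2
  simp

theorem sup_id_subset_of_mem_disjointShortChords (hJ : J ∈ disjointShortChords k m j) :
    J.sup id ⊆ range m :=
  Finset.sup_le fun _ hB => (mem_shortChords.1 ((mem_disjointShortChords.1 hJ).1 hB)).1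

theorem disjointShortChords_eq_empty (h : m < k * j) : disjointShortChords k m j = ∅ :=
  eq_empty_of_forall_notMem fun J hJ => h.not_ge <| by
    simpa [← card_sup_id_of_mem_disjointShortChords hJ] using
      card_le_card (sup_id_subset_of_mem_disjointShortChords hJ)

theorem card_disjointShortChords_add (hk : 0 < k) (a j : ℕ) :
    #(disjointShortChords k (a + k) (j + 1)) =
      #(disjointShortChords k (a + k - 1) (j + 1)) + #(disjointShortChords k a j) := by
  set L := Ico a (a + k)
  have hL : L ∈ shortChords k (a + k) :=
    mem_shortChords.2 ⟨fun x hx => by simp_all [L], a, rfl⟩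
  have hLnot : ∀ {m}, m < a + k → L ∉ shortChords k m := fun hm hL => by
    have := mem_range.1
      ((mem_shortChords.1 hL).1 (mem_Ico.2 ⟨by omega, by omega⟩ : a + k - 1 ∈ L))
    omega
  have hother :
      ∀ {B}, B ∈ shortChords k (a + k) → B ≠ L → B ∈ shortChords k (a + k - 1) := by
    intro B hB hBL
    obtain ⟨hBr, i, rfl⟩ := mem_shortChords.1 hB
    have hi : i + k - 1 < a + k := mem_range.1 (hBr (by simp; omega))
    refine mem_shortChords.2 ⟨fun x hx => ?_, i, rfl⟩
    have hxB := mem_Ico.1 hx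
    have hx' := mem_range.1 (hBr hx)
    refine mem_range.2 (lt_of_le_of_ne (by omega) fun hxa => hBL ?_)
    simp only [L, show i = a by omega]
  have hbelow :
      ∀ {B}, B ⊆ range (a + k) → Disjoint B L → B ⊆ range a := fun hB hBL x hx => by
    have := mem_range.1 (hB hx)
    have := disjoint_left.1 hBL hx
    simp only [L, mem_Ico, not_and, not_lt] at this
    exact mem_range.2 (by omega)
  rw [← card_filter_add_card_filter_not (s := disjointShortChords k (a + k) (j + 1)) (L ∈ ·),
    add_comm]
  congr 1
  · congr 1
    ext J
    simp only [mem_filter, mem_disjointShortChords]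
    constructor
    · rintro ⟨⟨hJC, hJj, hdisj⟩, hLJ⟩
      exact ⟨fun B hB => hother (hJC hB) (ne_of_mem_of_not_mem hB hLJ), hJj, hdisj⟩
    · rintro ⟨hJC, hJj, hdisj⟩
      exact ⟨⟨hJC.trans (shortChords_mono (by omega)), hJj, hdisj⟩,
        fun hLJ => hLnot (by omega) (hJC hLJ)⟩
  · refine card_nbij' (·.erase L) (insert L) (fun J hJ => ?_) (fun J hJ => ?_)
      (fun J hJ => insert_erase (mem_filter.1 hJ).2)
      (fun J hJ =>
        erase_insert fun hLJ => hLnot (by omega) ((mem_disjointShortChords.1 hJ).1 hLJ))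
    · obtain ⟨hJ, hLJ⟩ := mem_filter.1 hJ
      obtain ⟨hJC, hJj, hdisj⟩ := mem_disjointShortChords.1 hJ
      refine mem_disjointShortChords.2 ⟨fun B hB => ?_, by rw [card_erase_of_mem hLJ, hJj]; rfl,
        hdisj.subset (coe_subset.2 (erase_subset _ _))⟩
      obtain ⟨hBL, hBJ⟩ := mem_erase.1 hB
      obtain ⟨hBr, hBs⟩ := mem_shortChords.1 (hJC hBJ)
      exact mem_shortChords.2 ⟨hbelow hBr (hdisj hBJ hLJ hBL), hBs⟩
    · obtain ⟨hJC, hJj, hdisj⟩ := mem_disjointShortChords.1 hJ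
      have hLJ : L ∉ J := fun hLJ => hLnot (by omega) (hJC hLJ)
      refine mem_filter.2 ⟨mem_disjointShortChords.2 ⟨insert_subset hL
        (hJC.trans (shortChords_mono (by omega))), by rw [card_insert_of_notMem hLJ, hJj], ?_⟩,
        mem_insert_self _ _⟩
      rw [coe_insert]
      refine hdisj.insert fun B hB _ => (disjoint_left.2 fun x hxB hxL => ?_).symm
      have := mem_range.1 ((mem_shortChords.1 (hJC hB)).1 hxB)
      have := (mem_Ico.1 hxL).1
      omega

theorem card_disjointShortChords (hk : 0 < k) (N j : ℕ) :
    #(disjointShortChords k (N + j * (k - 1)) j) = N.choose j := by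
  induction j generalizing N with
  | zero => simp [disjointShortChords, filter_singleton]
  | succ j ihj =>
    induction N with
    | zero =>
      rw [disjointShortChords_eq_empty, card_empty, Nat.choose_zero_succ]
      rw [zero_add, mul_comm k]
      exact Nat.mul_lt_mul_of_pos_left (by omega) (by omega)
    | succ N ihN =>
      have h := card_disjointShortChords_add hk (N + j * (k - 1)) j
      rw [show N + j * (k - 1) + k = N + 1 + (j + 1) * (k - 1) by rw [add_one_mul]; omega,
        show N + 1 + (j + 1) * (k - 1) - 1 = N + (j + 1) * (k - 1) by omega] at h
      rw [h, ihN, ihj, Nat.choose_succ_succ', add_comm]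

theorem sum_card_powersetCard_inter_shortChords {n : ℕ} (hk : 0 < k) :
    ∑ R ∈ uniformPartitions k (range (k * n)), #((R ∩ shortChords k (k * n)).powersetCard j) =
      #(disjointShortChords k (k * n) j) * ((k * (n - j))! / (k ! ^ (n - j) * (n - j)!)) := by
  classical
  have hdisj : ∀ J ∈ (shortChords k (k * n)).powersetCard j,
      #{R ∈ uniformPartitions k (range (k * n)) | J ⊆ R} ≠ 0 →
        (J : Set (Finset ℕ)).PairwiseDisjoint id := fun J _ hJ => by
    obtain ⟨R, hR⟩ := card_pos.1 (Nat.pos_of_ne_zero hJ)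
    obtain ⟨hRs, hJR⟩ := mem_filter.1 hR
    exact (mem_uniformPartitions.1 hRs).2.1.subset (coe_subset.2 hJR)
  rw [sum_card_powersetCard_inter, ← sum_filter_of_ne hdisj, ← disjointShortChords]
  refine sum_const_nat fun J hJ => ?_
  obtain ⟨hJC, -, hJdisj⟩ := mem_disjointShortChords.1 hJ
  have hJk : ∀ B ∈ J, #B = k := fun B hB => by
    obtain ⟨i, rfl⟩ := (mem_shortChords.1 (hJC hB)).2
    simp
  rw [card_filter_superset_uniformPartitions hk hJdisj hJk
    (sup_id_subset_of_mem_disjointShortChords hJ), card_uniformPartitions hk]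
  rw [card_sdiff_of_subset (sup_id_subset_of_mem_disjointShortChords hJ), card_range,
    card_sup_id_of_mem_disjointShortChords hJ, Nat.mul_sub]

end ShortChords

/-- The number of linear `k`-chord diagrams of length `k*n` with no short chord equals
`Σ_{j=0}^n (-1)^j ((k(n-j))!/((k!)^{n-j}(n-j)!)) C(kn - j(k-1), j)`.
The inner natural-number division is exact. -/
theorem stmt3 (k n : ℕ) (hk : 1 ≤ k) :
    (Nat.card {P : Finpartition (Finset.range (k * n)) //
        (∀ B ∈ P.parts, B.card = k) ∧
        ∀ B ∈ P.parts, ¬ ∃ i, B = Finset.Ico i (i + k)} : ℤ)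
    = ∑ j ∈ Finset.range (n + 1), (-1) ^ j *
        ((Nat.factorial (k * (n - j)) / (Nat.factorial k ^ (n - j) * Nat.factorial (n - j))
          * Nat.choose (k * n - j * (k - 1)) j : ℕ) : ℤ) := by
  have hcount : Nat.card {P : Finpartition (range (k * n)) //
      (∀ B ∈ P.parts, #B = k) ∧ ∀ B ∈ P.parts, ¬ ∃ i, B = Ico i (i + k)} =
        #{R ∈ uniformPartitions k (range (k * n)) | R ∩ shortChords k (k * n) = ∅} := by
    rw [Nat.card_congr <|
        uniformFinpartitionEquiv hk _ fun R => ∀ B ∈ R, ¬ ∃ i, B = Ico i (i + k),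
      ← Nat.card_eq_finsetCard]
    exact Nat.card_congr <| Equiv.subtypeEquivRight fun R => by
      rw [mem_filter]
      exact and_congr_right fun hR => (inter_shortChords_eq_empty_iff hR).symm
  have hblocks :
      ∀ R ∈ uniformPartitions k (range (k * n)), #(R ∩ shortChords k (k * n)) ≤ n :=
    fun R hR => (card_le_card inter_subset_left).trans_eq <| Nat.eq_of_mul_eq_mul_left hk <| by
      rw [← card_eq_mul_card_of_mem_uniformPartitions hR, card_range]
  rw [hcount, card_filter_eq_empty_eq_alternating_sum _ _ hblocks]
  refine sum_congr rfl fun j hj => ?_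
  have hjk : j * (k - 1) ≤ k * n :=
    (Nat.mul_le_mul (mem_range_succ_iff.1 hj) (Nat.sub_le k 1)).trans_eq (mul_comm n k)
  have hchoose := card_disjointShortChords hk (k * n - j * (k - 1)) j
  rw [Nat.sub_add_cancel hjk] at hchoose
  rw [← Nat.cast_sum, sum_card_powersetCard_inter_shortChords hk, hchoose,
    Nat.mul_comm ((k * n - j * (k - 1)).choose j)]
end

section
/- The numbers d_{n,ℓ} of linear k-chord diagrams of length kn with exactly ℓ short chords satisfy the recurrence ℓ · d_{n,ℓ} = (kn - ℓ(k-1)) · d_{n-1,ℓ-1} + ℓ(k-1) · d_{n-1,ℓ} for n ≥ 1 and ℓ ≥ 1. -/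
open scoped Classical

/-- `dCount k n ℓ` is the number of linear `k`-chord diagrams of length `k*n`
(partitions of `{0,...,k*n-1}` into blocks of size `k`) with exactly `ℓ` short chords
(blocks of `k` consecutive vertices). -/
noncomputable def dCount (k n ℓ : ℕ) : ℕ :=
  Nat.card {P : Finpartition (Finset.range (k * n)) //
    (∀ B ∈ P.parts, B.card = k) ∧
    (P.parts.filter (fun B => ∃ i, B = Finset.Ico i (i + k))).card = ℓ}


/-!
Double count the diagrams of length `k (n + 1)` with `ℓ + 1` short chords, one of which is
marked: there are `(ℓ + 1) d_{n+1,ℓ+1}` of them. Deleting the marked chord `[p, p + k)` and closing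
the gap leaves a diagram `Q` of length `m = k n` together with the position `p ≤ m`; conversely a
short chord can be inserted into any diagram at any position `p ≤ m`. The short chords of the result
are the new one and those of `Q` that do not straddle `p`, and each short chord of `Q` is straddled
by exactly `k - 1` positions. Hence either `Q` has `ℓ` short chords and `p` is one of the
`m + 1 - ℓ (k - 1)` positions straddling none of them, or `Q` has `ℓ + 1` short chords and `p` is
one of the `(ℓ + 1)(k - 1)` positions straddling one.
-/

open Finset

namespace Finpartition

variable {α β : Type*} [DecidableEq α] [DecidableEq β] {s : Finset α}

def image (P : Finpartition s) (f : α → β) (hf : Set.InjOn f s) : Finpartition (s.image f) where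
  parts := P.parts.image (Finset.image f)
  supIndep := by
    rw [supIndep_iff_pairwiseDisjoint]
    rintro _ hX _ hY hXY
    obtain ⟨C, hC, rfl⟩ := mem_image.1 hX
    obtain ⟨D, hD, rfl⟩ := mem_image.1 hY
    have hCD := P.disjoint hC hD (fun h => hXY (h ▸ rfl))
    rw [Function.onFun, id, id, ← disjoint_coe, coe_image, coe_image]
    exact (disjoint_coe.2 hCD).image hf (coe_subset.2 (P.le hC)) (coe_subset.2 (P.le hD))
  sup_parts := by
    rw [sup_image, Function.id_comp]
    conv_rhs => rw [← P.sup_parts, sup_eq_biUnion, biUnion_image, ← sup_eq_biUnion]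
    rfl
  bot_notMem h := by
    obtain ⟨C, hC, hCe⟩ := mem_image.1 h
    exact P.ne_bot hC (image_eq_empty.1 hCe)

lemma sup_erase_parts (P : Finpartition s) {B : Finset α} (hB : B ∈ P.parts) :
    (P.parts.erase B).sup id = s \ B := by
  ext x
  simp only [mem_sup, mem_erase, id, mem_sdiff]
  constructor
  · rintro ⟨C, ⟨hCB, hC⟩, hx⟩
    exact ⟨P.le hC hx, fun hxB => hCB (P.eq_of_mem_parts hC hB hx hxB)⟩
  · rintro ⟨hx, hxB⟩
    obtain ⟨C, hC, hxC⟩ := P.exists_mem hx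
    exact ⟨C, ⟨fun h => hxB (h ▸ hxC), hC⟩, hxC⟩

def erasePart (P : Finpartition s) {B : Finset α} (hB : B ∈ P.parts) : Finpartition (s \ B) :=
  P.ofSubset (erase_subset B P.parts) (P.sup_erase_parts hB)

end Finpartition

namespace ChordDiagram

def shiftUp (k p j : ℕ) : ℕ := if j < p then j else j + k

def shiftDown (k p j : ℕ) : ℕ := if j < p then j else j - k

section Shift

variable {k p : ℕ}

lemma shiftUp_strictMono : StrictMono (shiftUp k p) := by
  intro a b h; unfold shiftUp; split_ifs <;> omega

lemma shiftDown_shiftUp (j : ℕ) : shiftDown k p (shiftUp k p j) = j := by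
  unfold shiftUp shiftDown; split_ifs <;> omega

lemma shiftUp_shiftDown {j : ℕ} (h : j ∉ Ico p (p + k)) : shiftUp k p (shiftDown k p j) = j := by
  rw [mem_Ico] at h
  unfold shiftUp shiftDown; split_ifs <;> omega

lemma shiftUp_notMem_Ico (j : ℕ) : shiftUp k p j ∉ Ico p (p + k) := by
  rw [mem_Ico]
  unfold shiftUp; split_ifs <;> omega

lemma mem_image_shiftUp {C : Finset ℕ} {y : ℕ} :
    y ∈ C.image (shiftUp k p) ↔ y ∉ Ico p (p + k) ∧ shiftDown k p y ∈ C := by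
  constructor
  · rintro h
    obtain ⟨x, hx, rfl⟩ := mem_image.1 h
    exact ⟨shiftUp_notMem_Ico x, by rwa [shiftDown_shiftUp]⟩
  · rintro ⟨h1, h2⟩
    exact mem_image.2 ⟨_, h2, shiftUp_shiftDown h1⟩

lemma image_shiftUp_range {m : ℕ} (hp : p ≤ m) :
    (range m).image (shiftUp k p) = range (m + k) \ Ico p (p + k) := by
  ext y
  rw [mem_image_shiftUp]
  simp only [mem_sdiff, mem_range, mem_Ico, shiftDown]
  split_ifs <;> omega

lemma injOn_shiftDown (s : Finset ℕ) : Set.InjOn (shiftDown k p) ↑(s \ Ico p (p + k)) := by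
  intro x hx y hy hxy
  rw [coe_sdiff, Set.mem_sdiff, mem_coe] at hx hy
  rw [← shiftUp_shiftDown hx.2, ← shiftUp_shiftDown hy.2, hxy]

lemma image_shiftDown_range {m : ℕ} (hp : p ≤ m) :
    (range (m + k) \ Ico p (p + k)).image (shiftDown k p) = range m := by
  rw [← image_shiftUp_range hp, image_image]
  exact (image_congr fun j _ => shiftDown_shiftUp j).trans image_id

lemma image_shiftUp_Ico {a : ℕ} (h : a + k ≤ p ∨ p ≤ a) :
    (Ico a (a + k)).image (shiftUp k p) = Ico (shiftUp k p a) (shiftUp k p a + k) := by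
  ext y
  rw [mem_image_shiftUp]
  simp only [mem_Ico, shiftUp, shiftDown]
  split_ifs <;> omega

end Shift

lemma Ico_add_injective {k : ℕ} (hk : 0 < k) : Function.Injective fun a => Ico a (a + k) := by
  intro a b h
  replace h : Ico a (a + k) = Ico b (b + k) := h
  have ha : a ∈ Ico b (b + k) := h ▸ left_mem_Ico.2 (by omega)
  have hb : b ∈ Ico a (a + k) := h.symm ▸ left_mem_Ico.2 (by omega)
  rw [mem_Ico] at ha hb
  omega

lemma add_le_of_Ico_mem_parts {k N a : ℕ} {P : Finpartition (range N)}
    (h : Ico a (a + k) ∈ P.parts) : a + k ≤ N := by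
  have hne := nonempty_Ico.1 (P.nonempty_of_mem_parts h)
  have hsub : Ico a (a + k) ⊆ Ico 0 N := by rw [← range_eq_Ico]; exact P.le h
  exact ((Ico_subset_Ico_iff hne).1 hsub).2

section Chords

variable {k p m : ℕ}

lemma Ico_notMem_image_image_shiftUp (hk : 0 < k) (t : Finset (Finset ℕ)) :
    Ico p (p + k) ∉ t.image (Finset.image (shiftUp k p)) := by
  intro h
  obtain ⟨C, -, hC⟩ := mem_image.1 h
  have hp : p ∈ Ico p (p + k) := left_mem_Ico.2 (by omega)
  rw [← hC] at hp
  exact (mem_image_shiftUp.1 hp).1 (left_mem_Ico.2 (by omega))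

def insertChord (hk : 0 < k) (hp : p ≤ m) (Q : Finpartition (range m)) :
    Finpartition (range (m + k)) :=
  (Q.image (shiftUp k p) shiftUp_strictMono.injective.injOn).extend
    (b := Ico p (p + k)) (nonempty_Ico.2 (by omega)).ne_empty
    (by rw [image_shiftUp_range hp]; exact sdiff_disjoint)
    (by
      rw [image_shiftUp_range hp, sup_eq_union, range_eq_Ico]
      exact sdiff_union_of_subset (Ico_subset_Ico (Nat.zero_le p) (by omega)))

lemma parts_insertChord (hk : 0 < k) (hp : p ≤ m) (Q : Finpartition (range m)) :
    (insertChord hk hp Q).parts = insert (Ico p (p + k)) (Q.parts.image (image (shiftUp k p))) :=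
  rfl

lemma Ico_mem_parts_insertChord (hk : 0 < k) (hp : p ≤ m) (Q : Finpartition (range m)) :
    Ico p (p + k) ∈ (insertChord hk hp Q).parts :=
  mem_insert_self _ _

def eraseChord (P : Finpartition (range (m + k))) (h : Ico p (p + k) ∈ P.parts) :
    Finpartition (range m) :=
  ((P.erasePart h).image (shiftDown k p) (injOn_shiftDown _)).copy
    (image_shiftDown_range (by have := add_le_of_Ico_mem_parts h; omega))

lemma parts_eraseChord (P : Finpartition (range (m + k))) (h : Ico p (p + k) ∈ P.parts) :
    (eraseChord P h).parts = (P.parts.erase (Ico p (p + k))).image (image (shiftDown k p)) :=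
  rfl

lemma eraseChord_insertChord (hk : 0 < k) (hp : p ≤ m) (Q : Finpartition (range m)) :
    eraseChord (insertChord hk hp Q) (Ico_mem_parts_insertChord hk hp Q) = Q := by
  ext1
  rw [parts_eraseChord, parts_insertChord, erase_insert (Ico_notMem_image_image_shiftUp hk _),
    image_image]
  refine (image_congr fun C _ => ?_).trans image_id
  simp only [Function.comp, image_image]
  exact (image_congr fun j _ => shiftDown_shiftUp j).trans image_id

lemma insertChord_eraseChord (hk : 0 < k) (hp : p ≤ m) (P : Finpartition (range (m + k)))
    (h : Ico p (p + k) ∈ P.parts) : insertChord hk hp (eraseChord P h) = P := by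
  ext1
  rw [parts_insertChord, parts_eraseChord, image_image]
  refine (congrArg _ ((image_congr fun C hC => ?_).trans image_id)).trans (insert_erase h)
  have hdisj : Disjoint C (Ico p (p + k)) :=
    P.disjoint (mem_erase.1 hC).2 h (mem_erase.1 hC).1
  simp only [Function.comp, image_image, id]
  exact (image_congr fun j hj => shiftUp_shiftDown (disjoint_left.1 hdisj hj)).trans image_id

lemma card_eq_of_mem_parts_insertChord (hk : 0 < k) (hp : p ≤ m) {Q : Finpartition (range m)}
    (hQ : ∀ C ∈ Q.parts, #C = k) : ∀ B ∈ (insertChord hk hp Q).parts, #B = k := by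
  intro B hB
  rw [parts_insertChord, mem_insert, mem_image] at hB
  rcases hB with rfl | ⟨C, hC, rfl⟩
  · rw [Nat.card_Ico]; omega
  · rw [card_image_of_injective _ shiftUp_strictMono.injective, hQ C hC]

lemma card_eq_of_mem_parts_eraseChord {P : Finpartition (range (m + k))}
    (h : Ico p (p + k) ∈ P.parts) (hP : ∀ C ∈ P.parts, #C = k) :
    ∀ B ∈ (eraseChord P h).parts, #B = k := by
  intro B hB
  rw [parts_eraseChord, mem_image] at hB
  obtain ⟨C, hC, rfl⟩ := hB
  obtain ⟨hCne, hC⟩ := mem_erase.1 hC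
  rw [card_image_of_injOn, hP C hC]
  refine (injOn_shiftDown (range (m + k))).mono ?_
  rw [coe_sdiff]
  exact Set.subset_sdiff.2 ⟨coe_subset.2 (P.le hC), disjoint_coe.2 (P.disjoint hC h hCne)⟩

end Chords

noncomputable def shortChords {s : Finset ℕ} (k : ℕ) (P : Finpartition s) : Finset (Finset ℕ) :=
  P.parts.filter fun B => ∃ i, B = Ico i (i + k)

-- `p` lies strictly inside the short chord `C`, so inserting new vertices before `p` breaks `C` up.
def SplitsChord (k p : ℕ) (C : Finset ℕ) : Prop :=
  ∃ a, C = Ico a (a + k) ∧ p ∈ Ioo a (a + k)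

def Splits {s : Finset ℕ} (k p : ℕ) (Q : Finpartition s) : Prop :=
  ∃ C ∈ Q.parts, SplitsChord k p C

section ShortChords

variable {k p m : ℕ}

lemma exists_image_shiftUp_eq_Ico_iff (hk : 0 < k) {C : Finset ℕ} :
    (∃ b, C.image (shiftUp k p) = Ico b (b + k)) ↔
      (∃ a, C = Ico a (a + k)) ∧ ¬ SplitsChord k p C := by
  constructor
  · rintro ⟨b, hCb⟩
    have hmem : ∀ y ∈ Ico b (b + k), y ∉ Ico p (p + k) := fun y hy =>
      (mem_image_shiftUp.1 (hCb ▸ hy)).1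
    have hb : b ∉ Ico p (p + k) := hmem b (left_mem_Ico.2 (by omega))
    have hp : p ∉ Ico b (b + k) := fun hp => hmem p hp (left_mem_Ico.2 (by omega))
    have hgap : shiftDown k p b + k ≤ p ∨ p ≤ shiftDown k p b := by
      simp only [mem_Ico, not_and, not_lt] at hb hp
      unfold shiftDown; split_ifs <;> omega
    have hC : C = Ico (shiftDown k p b) (shiftDown k p b + k) := by
      apply image_injective shiftUp_strictMono.injective
      rw [hCb, image_shiftUp_Ico hgap, shiftUp_shiftDown hb]
    refine ⟨⟨_, hC⟩, ?_⟩
    rintro ⟨a, ha, hpa⟩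
    rw [mem_Ioo, Ico_add_injective hk (ha.symm.trans hC)] at hpa
    omega
  · rintro ⟨⟨a, rfl⟩, hns⟩
    have hgap : a + k ≤ p ∨ p ≤ a := by
      by_contra! h
      exact hns ⟨a, rfl, mem_Ioo.2 ⟨by omega, by omega⟩⟩
    exact ⟨_, image_shiftUp_Ico hgap⟩

lemma shortChords_insertChord (hk : 0 < k) (hp : p ≤ m) (Q : Finpartition (range m)) :
    shortChords k (insertChord hk hp Q) = insert (Ico p (p + k))
      (((shortChords k Q).filter fun C => ¬ SplitsChord k p C).image (image (shiftUp k p))) := by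
  rw [shortChords, parts_insertChord, filter_insert, if_pos ⟨p, rfl⟩, filter_image, shortChords,
    filter_filter]
  congr 2
  exact filter_congr fun C _ => exists_image_shiftUp_eq_Ico_iff hk

lemma card_filter_splitsChord {s : Finset ℕ} (Q : Finpartition s) :
    #(Q.parts.filter (SplitsChord k p)) = if Splits k p Q then 1 else 0 := by
  split_ifs with h
  · obtain ⟨C, hC, hCs⟩ := h
    refine card_eq_one.2 ⟨C, eq_singleton_iff_unique_mem.2 ⟨mem_filter.2 ⟨hC, hCs⟩, ?_⟩⟩
    rintro D hD
    obtain ⟨hD, a, rfl, hpa⟩ := mem_filter.1 hD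
    obtain ⟨b, rfl, hpb⟩ := hCs
    exact Q.eq_of_mem_parts hD hC (Ioo_subset_Ico_self hpa) (Ioo_subset_Ico_self hpb)
  · exact card_eq_zero.2 (filter_eq_empty_iff.2 fun C hC hCs => h ⟨C, hC, hCs⟩)

lemma card_shortChords_insertChord (hk : 0 < k) (hp : p ≤ m) (Q : Finpartition (range m)) :
    #(shortChords k (insertChord hk hp Q)) + (if Splits k p Q then 1 else 0) =
      #(shortChords k Q) + 1 := by
  have hsplit : Q.parts.filter (SplitsChord k p) = (shortChords k Q).filter (SplitsChord k p) := by
    rw [shortChords, filter_filter]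
    refine filter_congr fun C _ => ⟨fun h => ⟨?_, h⟩, And.right⟩
    obtain ⟨a, rfl, -⟩ := h
    exact ⟨a, rfl⟩
  rw [shortChords_insertChord, card_insert_of_notMem (Ico_notMem_image_image_shiftUp hk _),
    card_image_of_injective _ (image_injective shiftUp_strictMono.injective),
    ← card_filter_splitsChord, hsplit,
    ← card_filter_add_card_filter_not (s := shortChords k Q) (SplitsChord k p)]
  omega

lemma card_shortChords_eq_card_filter (hk : 0 < k) {s t : Finset ℕ} {P : Finpartition s}
    (ht : ∀ a, Ico a (a + k) ∈ P.parts → a ∈ t) :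
    #(shortChords k P) = #(t.filter fun a => Ico a (a + k) ∈ P.parts) := by
  symm
  refine card_nbij (fun a => Ico a (a + k)) (fun a ha => ?_)
    (Ico_add_injective hk).injOn (fun C hC => ?_)
  · exact mem_filter.2 ⟨(mem_filter.1 ha).2, a, rfl⟩
  · obtain ⟨hC, a, rfl⟩ := mem_filter.1 hC
    exact ⟨a, mem_filter.2 ⟨ht a hC, hC⟩, rfl⟩

lemma card_filter_splits (hk : 0 < k) (Q : Finpartition (range m)) :
    #((range (m + 1)).filter fun p => Splits k p Q) = #(shortChords k Q) * (k - 1) := by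
  have hstarts : ∀ a, Ico a (a + k) ∈ Q.parts → a ∈ range (m + 1) := fun a ha => by
    have := add_le_of_Ico_mem_parts ha
    rw [mem_range]; omega
  have hbiUnion : (range (m + 1)).filter (fun p => Splits k p Q) =
      ((range (m + 1)).filter fun a => Ico a (a + k) ∈ Q.parts).biUnion fun a => Ioo a (a + k) := by
    ext p
    simp only [mem_filter, mem_biUnion]
    unfold Splits SplitsChord
    constructor
    · rintro ⟨-, C, hC, a, rfl, hpa⟩
      exact ⟨a, ⟨hstarts a hC, hC⟩, hpa⟩
    · rintro ⟨a, ⟨-, hC⟩, hpa⟩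
      have := add_le_of_Ico_mem_parts hC
      rw [mem_Ioo] at hpa
      exact ⟨mem_range.2 (by omega), _, hC, a, rfl, mem_Ioo.2 hpa⟩
  rw [hbiUnion, card_biUnion, sum_const_nat, ← card_shortChords_eq_card_filter hk hstarts]
  · intro a _
    rw [Nat.card_Ioo]; omega
  · intro a ha b hb hab
    refine disjoint_of_subset_left Ioo_subset_Ico_self
      (disjoint_of_subset_right Ioo_subset_Ico_self ?_)
    exact Q.disjoint (mem_filter.1 ha).2 (mem_filter.1 hb).2 ((Ico_add_injective hk).ne hab)

end ShortChords

noncomputable def diagrams (k N L : ℕ) : Finset (Finpartition (range N)) :=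
  univ.filter fun P => (∀ B ∈ P.parts, #B = k) ∧ #(shortChords k P) = L

lemma dCount_eq_card_diagrams (k n ℓ : ℕ) : dCount k n ℓ = #(diagrams k (k * n) ℓ) := by
  rw [dCount, Nat.card_eq_fintype_card, Fintype.card_subtype]
  rfl

section Counting

variable {k m L : ℕ}

noncomputable def markedDiagrams (k m L : ℕ) : Finset (Σ _ : Finpartition (range (m + k)), ℕ) :=
  (diagrams k (m + k) L).sigma fun P => (range (m + 1)).filter fun p => Ico p (p + k) ∈ P.parts

-- By `card_shortChords_insertChord`, these are the `(Q, p)` such that inserting a short chord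
-- at `p` into `Q` produces a diagram with `L + 1` short chords.
noncomputable def insertionSites (k m L : ℕ) : Finset (Σ _ : Finpartition (range m), ℕ) :=
  (univ.filter fun Q : Finpartition (range m) => ∀ B ∈ Q.parts, #B = k).sigma fun Q =>
    (range (m + 1)).filter fun p => #(shortChords k Q) = L + if Splits k p Q then 1 else 0

lemma card_markedDiagrams (hk : 0 < k) :
    #(markedDiagrams k m L) = L * #(diagrams k (m + k) L) := by
  rw [markedDiagrams, card_sigma, mul_comm, ← smul_eq_mul, ← sum_const]
  refine sum_congr rfl fun P hP => ?_
  rw [← (mem_filter.1 hP).2.2]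
  refine (card_shortChords_eq_card_filter hk fun a ha => ?_).symm
  have := add_le_of_Ico_mem_parts ha
  rw [mem_range]; omega

lemma le_of_mem_markedDiagrams {x : Σ _ : Finpartition (range (m + k)), ℕ}
    (hx : x ∈ markedDiagrams k m L) : x.2 ≤ m := by
  have := (mem_filter.1 (mem_sigma.1 hx).2).1
  rw [mem_range] at this; omega

lemma Ico_mem_parts_of_mem_markedDiagrams {x : Σ _ : Finpartition (range (m + k)), ℕ}
    (hx : x ∈ markedDiagrams k m L) : Ico x.2 (x.2 + k) ∈ x.1.parts :=
  (mem_filter.1 (mem_sigma.1 hx).2).2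

lemma le_of_mem_insertionSites {y : Σ _ : Finpartition (range m), ℕ}
    (hy : y ∈ insertionSites k m L) : y.2 ≤ m := by
  have := (mem_filter.1 (mem_sigma.1 hy).2).1
  rw [mem_range] at this; omega

lemma mem_insertionSites_eraseChord (hk : 0 < k) {x : Σ _ : Finpartition (range (m + k)), ℕ}
    (hx : x ∈ markedDiagrams k m (L + 1)) :
    ⟨eraseChord x.1 (Ico_mem_parts_of_mem_markedDiagrams hx), x.2⟩ ∈ insertionSites k m L := by
  obtain ⟨hP, hPshort⟩ := (mem_filter.1 (mem_sigma.1 hx).1).2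
  have hcard := card_shortChords_insertChord hk (le_of_mem_markedDiagrams hx)
    (eraseChord x.1 (Ico_mem_parts_of_mem_markedDiagrams hx))
  rw [insertChord_eraseChord, hPshort] at hcard
  refine mem_sigma.2 ⟨mem_filter.2 ⟨mem_univ _, card_eq_of_mem_parts_eraseChord _ hP⟩,
    mem_filter.2 ⟨(mem_filter.1 (mem_sigma.1 hx).2).1, by dsimp only; omega⟩⟩

lemma mem_markedDiagrams_insertChord (hk : 0 < k) {y : Σ _ : Finpartition (range m), ℕ}
    (hy : y ∈ insertionSites k m L) :
    ⟨insertChord hk (le_of_mem_insertionSites hy) y.1, y.2⟩ ∈ markedDiagrams k m (L + 1) := by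
  have hQ := (mem_filter.1 (mem_sigma.1 hy).1).2
  have hQshort := (mem_filter.1 (mem_sigma.1 hy).2).2
  have hp := le_of_mem_insertionSites hy
  have hcard := card_shortChords_insertChord hk hp y.1
  refine mem_sigma.2 ⟨mem_filter.2 ⟨mem_univ _, card_eq_of_mem_parts_insertChord hk hp hQ, ?_⟩,
    mem_filter.2 ⟨(mem_filter.1 (mem_sigma.1 hy).2).1, Ico_mem_parts_insertChord hk hp _⟩⟩
  dsimp only
  omega

lemma card_markedDiagrams_succ (hk : 0 < k) :
    #(markedDiagrams k m (L + 1)) = #(insertionSites k m L) :=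
  card_bij' (fun x hx => ⟨eraseChord x.1 (Ico_mem_parts_of_mem_markedDiagrams hx), x.2⟩)
    (fun y hy => ⟨insertChord hk (le_of_mem_insertionSites hy) y.1, y.2⟩)
    (fun _ hx => mem_insertionSites_eraseChord hk hx)
    (fun _ hy => mem_markedDiagrams_insertChord hk hy)
    (fun _ _ => by simp only [insertChord_eraseChord])
    (fun _ _ => by simp only [eraseChord_insertChord])

lemma card_filter_insertionSites (hk : 0 < k) (Q : Finpartition (range m)) :
    #((range (m + 1)).filter fun p => #(shortChords k Q) = L + if Splits k p Q then 1 else 0) =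
      (if #(shortChords k Q) = L then m + 1 - L * (k - 1) else 0) +
        if #(shortChords k Q) = L + 1 then (L + 1) * (k - 1) else 0 := by
  have hcount := card_filter_add_card_filter_not (s := range (m + 1)) fun p => Splits k p Q
  rw [card_filter_splits hk, card_range] at hcount
  by_cases hL : #(shortChords k Q) = L
  · rw [filter_congr fun p _ => show _ ↔ ¬ Splits k p Q by split_ifs with h <;> simp [h, hL]]
    rw [if_pos hL, if_neg (by omega), ← hL]
    omega
  by_cases hL' : #(shortChords k Q) = L + 1
  · rw [filter_congr fun p _ => show _ ↔ Splits k p Q by split_ifs with h <;> simp [h, hL']]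
    rw [if_neg hL, if_pos hL', card_filter_splits hk, hL', zero_add]
  · rw [if_neg hL, if_neg hL', filter_false_of_mem fun p _ => by split_ifs <;> omega, card_empty]

lemma card_insertionSites (hk : 0 < k) :
    #(insertionSites k m L) =
      (m + 1 - L * (k - 1)) * #(diagrams k m L) + (L + 1) * (k - 1) * #(diagrams k m (L + 1)) := by
  rw [insertionSites, card_sigma]
  simp_rw [card_filter_insertionSites hk]
  rw [sum_add_distrib, ← sum_filter, ← sum_filter, sum_const, sum_const, filter_filter,
    filter_filter, smul_eq_mul, smul_eq_mul, mul_comm, mul_comm (#_)]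
  rfl

end Counting

theorem succ_mul_card_diagrams {k m L : ℕ} (hk : 0 < k) :
    (L + 1) * #(diagrams k (m + k) (L + 1)) =
      (m + 1 - L * (k - 1)) * #(diagrams k m L) + (L + 1) * (k - 1) * #(diagrams k m (L + 1)) := by
  rw [← card_markedDiagrams hk, card_markedDiagrams_succ hk, card_insertionSites hk]

end ChordDiagram

theorem stmt7_general (k n ℓ : ℕ) (hk : 2 ≤ k) (hn : 1 ≤ n) (hℓ1 : 1 ≤ ℓ) :
    ℓ * dCount k n ℓ =
      (k * n - ℓ * (k - 1)) * dCount k (n - 1) (ℓ - 1) +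
        ℓ * (k - 1) * dCount k (n - 1) ℓ := by
  obtain ⟨n, rfl⟩ : ∃ n', n = n' + 1 := ⟨n - 1, by omega⟩
  obtain ⟨L, rfl⟩ : ∃ L, ℓ = L + 1 := ⟨ℓ - 1, by omega⟩
  have hcoef : k * (n + 1) - (L + 1) * (k - 1) = k * n + 1 - L * (k - 1) := by
    rw [Nat.mul_succ, Nat.succ_mul]
    omega
  rw [Nat.add_sub_cancel, Nat.add_sub_cancel, hcoef, ChordDiagram.dCount_eq_card_diagrams,
    ChordDiagram.dCount_eq_card_diagrams, ChordDiagram.dCount_eq_card_diagrams, Nat.mul_succ]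
  exact ChordDiagram.succ_mul_card_diagrams (by omega)

/-- The recurrence `ℓ d_{n,ℓ} = (kn - ℓ(k-1)) d_{n-1,ℓ-1} + ℓ(k-1) d_{n-1,ℓ}`. -/
theorem stmt7 (k n ℓ : ℕ) (hk : 2 ≤ k) (hn : 1 ≤ n) (hℓ1 : 1 ≤ ℓ) (hℓn : ℓ ≤ n) :
    ℓ * dCount k n ℓ =
      (k * n - ℓ * (k - 1)) * dCount k (n - 1) (ℓ - 1) +
        ℓ * (k - 1) * dCount k (n - 1) ℓ :=
  stmt7_general k n ℓ hk hn hℓ1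
end

section
/- For any k ≥ 2, the asymptotic distribution of the number of short chords in a uniformly random linear k-chord diagram of length kn is Poisson: for each fixed j ≥ 1, the j-th factorial moment, divided by λ^j where λ = k! k^{1-k} n^{2-k}, tends to 1 as n → ∞. -/
open scoped Classical
open Finset

/-- Raw model: partitions of `s` into blocks of size `k`, as finsets of blocks. -/
noncomputable def kparts (k : ℕ) (s : Finset ℕ) : Finset (Finset (Finset ℕ)) :=
  s.powerset.powerset.filter (fun F => (F : Set (Finset ℕ)).PairwiseDisjoint id ∧
    F.sup id = s ∧ ∀ B ∈ F, B.card = k)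

theorem mem_kparts {k : ℕ} {s : Finset ℕ} {F : Finset (Finset ℕ)} :
    F ∈ kparts k s ↔ (F : Set (Finset ℕ)).PairwiseDisjoint id ∧
      F.sup id = s ∧ ∀ B ∈ F, B.card = k := by
  simp only [kparts, mem_filter, mem_powerset, and_iff_right_iff_imp]
  rintro ⟨-, hsup, -⟩ B hB
  simpa using le_trans (Finset.le_sup (f := id) hB) hsup.le


/-- Build a `Finpartition` from a member of the raw model. -/
noncomputable def mkPart {k : ℕ} {s : Finset ℕ} (hk : 1 ≤ k) {F : Finset (Finset ℕ)}
    (hF : F ∈ kparts k s) : Finpartition s where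
  parts := F
  supIndep := Finset.supIndep_iff_pairwiseDisjoint.2 (mem_kparts.1 hF).1
  sup_parts := (mem_kparts.1 hF).2.1
  bot_notMem := by
    intro h
    have := (mem_kparts.1 hF).2.2 ⊥ h
    rw [Finset.bot_eq_empty, Finset.card_empty] at this
    omega

theorem mkPart_parts {k : ℕ} {s : Finset ℕ} (hk : 1 ≤ k) {F : Finset (Finset ℕ)}
    (hF : F ∈ kparts k s) : (mkPart hk hF).parts = F := rfl

theorem parts_mem_kparts {k : ℕ} {s : Finset ℕ} (P : Finpartition s)
    (hP : ∀ B ∈ P.parts, B.card = k) : P.parts ∈ kparts k s :=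
  mem_kparts.2 ⟨P.disjoint, P.sup_parts, hP⟩

theorem card_kparts_eq (k : ℕ) (hk : 1 ≤ k) (s : Finset ℕ) :
    Nat.card {P : Finpartition s // ∀ B ∈ P.parts, B.card = k} = (kparts k s).card := by
  rw [← Nat.card_eq_finsetCard]
  refine Nat.card_congr ⟨fun P => ⟨P.1.parts, parts_mem_kparts P.1 P.2⟩,
    fun F => ⟨mkPart hk F.2, (mem_kparts.1 F.2).2.2⟩, fun P => ?_, fun F => rfl⟩
  ext : 2
  rfl

theorem dCount_eq {k : ℕ} (n ℓ : ℕ) (hk : 1 ≤ k) :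
    dCount k n ℓ = ((kparts k (Finset.range (k * n))).filter
      (fun F => (F.filter (fun B => ∃ i, B = Finset.Ico i (i + k))).card = ℓ)).card := by
  rw [dCount, ← Nat.card_eq_finsetCard]
  refine Nat.card_congr ⟨fun P => ⟨P.1.parts, ?_⟩,
    fun F => ⟨mkPart hk (Finset.mem_filter.1 F.2).1,
      ⟨(mem_kparts.1 (Finset.mem_filter.1 F.2).1).2.2, (Finset.mem_filter.1 F.2).2⟩⟩,
    fun P => ?_, fun F => rfl⟩
  · exact Finset.mem_filter.2 ⟨parts_mem_kparts P.1 P.2.1, P.2.2⟩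
  · ext : 2
    rfl

theorem kparts_empty {k : ℕ} (hk : 1 ≤ k) : kparts k ∅ = {∅} := by
  ext F
  simp only [mem_kparts, mem_singleton]
  constructor
  · rintro ⟨-, hsup, hcard⟩
    rw [eq_empty_iff_forall_notMem]
    intro B hB
    have h1 : B ⊆ ∅ := by simpa using le_trans (Finset.le_sup (f := id) hB) hsup.le
    have := hcard B hB
    rw [Finset.subset_empty.1 h1] at this
    simp at this
    omega
  · rintro rfl
    refine ⟨by simp, by simp, by simp⟩

/-- Removing a block from a raw partition. -/
theorem erase_mem_kparts {k : ℕ} {s : Finset ℕ} {F : Finset (Finset ℕ)}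
    (hF : F ∈ kparts k s) {B : Finset ℕ} (hB : B ∈ F) :
    F.erase B ∈ kparts k (s \ B) := by
  obtain ⟨hdisj, hsup, hcard⟩ := mem_kparts.1 hF
  have hd : Disjoint B ((F.erase B).sup id) := by
    rw [Finset.disjoint_sup_right]
    intro C hC
    exact hdisj hB (Finset.mem_of_mem_erase hC) (Finset.ne_of_mem_erase hC).symm
  have hsup' : B ∪ (F.erase B).sup id = s := by
    conv_rhs => rw [← hsup, ← Finset.insert_erase hB, Finset.sup_insert]
    rfl
  refine mem_kparts.2 ⟨hdisj.subset (by simp [Finset.erase_subset]), ?_, fun C hC => hcard C (Finset.mem_of_mem_erase hC)⟩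
  rw [← hsup', Finset.union_sdiff_cancel_left hd]

theorem insert_mem_kparts {k : ℕ} {s : Finset ℕ} {B : Finset ℕ} (hBs : B ⊆ s)
    (hBk : B.card = k) {G : Finset (Finset ℕ)} (hG : G ∈ kparts k (s \ B)) :
    insert B G ∈ kparts k s := by
  obtain ⟨hdisj, hsup, hcard⟩ := mem_kparts.1 hG
  have hCd : ∀ C ∈ G, Disjoint B C := by
    intro C hC
    have : C ⊆ s \ B := by simpa using le_trans (Finset.le_sup (f := id) hC) hsup.le
    exact ((Finset.sdiff_disjoint (t := s) (s := B)).symm).mono_right this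
  refine mem_kparts.2 ⟨?_, ?_, ?_⟩
  · rw [Finset.coe_insert]
    refine hdisj.insert (fun C hC _ => ?_)
    simpa using hCd C hC
  · rw [Finset.sup_insert, hsup]
    simpa using Finset.union_sdiff_of_subset hBs
  · intro C hC
    rcases Finset.mem_insert.1 hC with rfl | hC
    · exact hBk
    · exact hcard C hC

theorem not_mem_of_kparts_sdiff {k : ℕ} (hk : 1 ≤ k) {s B : Finset ℕ} {a : ℕ} (ha : a ∈ B)
    {G : Finset (Finset ℕ)} (hG : G ∈ kparts k (s \ B)) : B ∉ G := by
  intro hBG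
  have hBe : B ⊆ s \ B := le_trans (Finset.le_sup (f := id) hBG) (mem_kparts.1 hG).2.1.le
  exact (Finset.mem_sdiff.1 (hBe ha)).2 ha

theorem kparts_decomp {k : ℕ} (hk : 1 ≤ k) {s : Finset ℕ} {a : ℕ} (ha : a ∈ s) :
    kparts k s = ((s.powersetCard k).filter (fun B => a ∈ B)).biUnion
      (fun B => (kparts k (s \ B)).image (insert B)) := by
  ext F
  constructor
  · intro hF
    obtain ⟨hdisj, hsup, hcard⟩ := mem_kparts.1 hF
    have : a ∈ F.sup id := hsup.symm ▸ ha
    obtain ⟨B, hBF, haB⟩ := Finset.mem_sup.1 this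
    refine Finset.mem_biUnion.2 ⟨B, ?_, ?_⟩
    · refine Finset.mem_filter.2 ⟨Finset.mem_powersetCard.2 ⟨?_, hcard B hBF⟩, haB⟩
      simpa using le_trans (Finset.le_sup (f := id) hBF) hsup.le
    · exact Finset.mem_image.2 ⟨F.erase B, erase_mem_kparts hF hBF, Finset.insert_erase hBF⟩
  · intro hF
    obtain ⟨B, hB, hF⟩ := Finset.mem_biUnion.1 hF
    obtain ⟨G, hG, rfl⟩ := Finset.mem_image.1 hF
    obtain ⟨hBs, hBk⟩ := Finset.mem_powersetCard.1 (Finset.mem_filter.1 hB).1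
    exact insert_mem_kparts hBs hBk hG

theorem card_kparts_succ {k : ℕ} (hk : 1 ≤ k) {s : Finset ℕ} {a : ℕ} (ha : a ∈ s) :
    (kparts k s).card = ∑ B ∈ (s.powersetCard k).filter (fun B => a ∈ B),
      (kparts k (s \ B)).card := by
  rw [kparts_decomp hk ha, Finset.card_biUnion, ]
  · refine Finset.sum_congr rfl (fun B hB => ?_)
    obtain ⟨hBs, hBk⟩ := Finset.mem_powersetCard.1 (Finset.mem_filter.1 hB).1
    have haB := (Finset.mem_filter.1 hB).2
    refine Finset.card_image_of_injOn (fun G hG G' hG' hins => ?_)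
    have h1 : B ∉ G := not_mem_of_kparts_sdiff hk haB hG
    have h2 : B ∉ G' := not_mem_of_kparts_sdiff hk haB hG'
    rw [← Finset.erase_insert h1, hins, Finset.erase_insert h2]
  · intro B hB B' hB' hne
    have haB := (Finset.mem_filter.1 hB).2
    have haB' := (Finset.mem_filter.1 hB').2
    obtain ⟨hBs, hBk⟩ := Finset.mem_powersetCard.1 (Finset.mem_filter.1 hB).1
    obtain ⟨hBs', hBk'⟩ := Finset.mem_powersetCard.1 (Finset.mem_filter.1 hB').1
    simp only [Finset.disjoint_left]
    intro F hF hF'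
    obtain ⟨G, hG, rfl⟩ := Finset.mem_image.1 hF
    obtain ⟨G', hG', hins⟩ := Finset.mem_image.1 hF'
    have hFk : insert B G ∈ kparts k s := insert_mem_kparts hBs hBk hG
    have hdisj := (mem_kparts.1 hFk).1
    have hBmem : B ∈ insert B G := Finset.mem_insert_self _ _
    have hB'mem : B' ∈ insert B G := by rw [← hins]; exact Finset.mem_insert_self _ _
    exact hne (hdisj.elim hBmem hB'mem (fun hd => (Finset.disjoint_left.1 hd haB haB').elim))

theorem card_blocks_through {k : ℕ} (hk : 1 ≤ k) {s : Finset ℕ} {a : ℕ} (ha : a ∈ s) :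
    ((s.powersetCard k).filter (fun B => a ∈ B)).card = (s.card - 1).choose (k - 1) := by
  rw [← Finset.card_erase_of_mem ha, ← Finset.card_powersetCard]
  refine Finset.card_nbij' (fun B => B.erase a) (fun C => insert a C) ?_ ?_ ?_ ?_
  · intro B hB
    obtain ⟨hBs, hBk⟩ := Finset.mem_powersetCard.1 (Finset.mem_filter.1 hB).1
    have haB := (Finset.mem_filter.1 hB).2
    exact Finset.mem_powersetCard.2 ⟨Finset.erase_subset_erase a hBs,
      by rw [Finset.card_erase_of_mem haB, hBk]⟩
  · intro C hC
    obtain ⟨hCs, hCk⟩ := Finset.mem_powersetCard.1 hC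
    have haC : a ∉ C := fun h => (Finset.mem_erase.1 (hCs h)).1 rfl
    refine Finset.mem_filter.2 ⟨Finset.mem_powersetCard.2 ⟨?_, ?_⟩, Finset.mem_insert_self _ _⟩
    · exact Finset.insert_subset ha (hCs.trans (Finset.erase_subset a s))
    · rw [Finset.card_insert_of_notMem haC, hCk]
      omega
  · intro B hB
    exact Finset.insert_erase (Finset.mem_filter.1 hB).2
  · intro C hC
    obtain ⟨hCs, hCk⟩ := Finset.mem_powersetCard.1 hC
    exact Finset.erase_insert (fun h => (Finset.mem_erase.1 (hCs h)).1 rfl)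

theorem kparts_card {k : ℕ} (hk : 1 ≤ k) :
    ∀ (m : ℕ) (s : Finset ℕ), s.card = k * m →
      k.factorial ^ m * m.factorial * (kparts k s).card = (k * m).factorial := by
  intro m
  induction m with
  | zero =>
    intro s hs
    have hs0 : s = ∅ := Finset.card_eq_zero.1 (by simpa using hs)
    subst hs0
    rw [kparts_empty hk]
    simp
  | succ m ih =>
    intro s hs
    have hpos : 0 < s.card := by
      rw [hs]; positivity
    obtain ⟨a, ha⟩ := Finset.card_pos.1 hpos
    rw [card_kparts_succ hk ha]
    have key : ∀ B ∈ (s.powersetCard k).filter (fun B => a ∈ B),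
        k.factorial ^ m * m.factorial * (kparts k (s \ B)).card = (k * m).factorial := by
      intro B hB
      obtain ⟨hBs, hBk⟩ := Finset.mem_powersetCard.1 (Finset.mem_filter.1 hB).1
      refine ih (s \ B) ?_
      rw [Finset.card_sdiff_of_subset hBs, hs, hBk]
      rw [Nat.mul_succ]
      omega
    have hsum : k.factorial ^ m * m.factorial * ∑ B ∈ (s.powersetCard k).filter (fun B => a ∈ B),
        (kparts k (s \ B)).card
        = ((s.powersetCard k).filter (fun B => a ∈ B)).card * (k * m).factorial := by
      rw [Finset.mul_sum, Finset.sum_congr rfl key, Finset.sum_const, smul_eq_mul]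
    have hNb : ((s.powersetCard k).filter (fun B => a ∈ B)).card
        = (k * m + k - 1).choose (k - 1) := by
      rw [card_blocks_through hk ha, hs, Nat.mul_succ]
    -- now arithmetic
    have harith : k.factorial * (m+1)
        * ((k * m + k - 1).choose (k-1) * (k*m).factorial) = (k * (m+1)).factorial := by
      have hms : k * (m + 1) = k * m + k := Nat.mul_succ k m
      have h1 : k - 1 ≤ k * m + k - 1 := by omega
      have h2 := Nat.choose_mul_factorial_mul_factorial h1
      have h3 : k * m + k - 1 - (k - 1) = k * m := by omega
      rw [h3] at h2
      have hk' : k.factorial = k * (k-1).factorial := by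
        conv_lhs => rw [show k = (k-1) + 1 by omega]
        rw [Nat.factorial_succ]
        congr 1
        omega
      have h4 : k * (m + 1) = (k * m + k - 1) + 1 := by omega
      have h5 : k * m + k - 1 + 1 = k * (m + 1) := by omega
      conv_rhs => rw [h4, Nat.factorial_succ, ← h2, h5]
      rw [hk']
      ring
    calc k.factorial ^ (m+1) * (m+1).factorial * ∑ B ∈ (s.powersetCard k).filter (fun B => a ∈ B),
          (kparts k (s \ B)).card
        = k.factorial * (m+1) * (k.factorial ^ m * m.factorial * ∑ B ∈ (s.powersetCard k).filter (fun B => a ∈ B),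
          (kparts k (s \ B)).card) := by rw [pow_succ, Nat.factorial_succ]; ring
      _ = k.factorial * (m+1) * (((s.powersetCard k).filter (fun B => a ∈ B)).card * (k * m).factorial) := by rw [hsum]
      _ = k.factorial * (m+1) * ((k * m + k - 1).choose (k-1) * (k*m).factorial) := by
          rw [hNb]
      _ = (k * (m+1)).factorial := harith


/-- Valid sets of `j` starting positions of pairwise disjoint length-`k` intervals in `[0,N)`. -/
noncomputable def starts (k N j : ℕ) : Finset (Finset ℕ) :=
  ((Finset.range N).powersetCard j).filter (fun I => (∀ i ∈ I, i + k ≤ N) ∧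
    (I : Set ℕ).Pairwise (fun i i' => i + k ≤ i' ∨ i' + k ≤ i))

theorem mem_starts {k N j : ℕ} (hk : 1 ≤ k) {I : Finset ℕ} :
    I ∈ starts k N j ↔ I.card = j ∧ (∀ i ∈ I, i + k ≤ N) ∧
      (I : Set ℕ).Pairwise (fun i i' => i + k ≤ i' ∨ i' + k ≤ i) := by
  simp only [starts, mem_filter, Finset.mem_powersetCard]
  constructor
  · rintro ⟨⟨-, h1⟩, h2, h3⟩; exact ⟨h1, h2, h3⟩
  · rintro ⟨h1, h2, h3⟩
    refine ⟨⟨fun i hi => Finset.mem_range.2 ?_, h1⟩, h2, h3⟩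
    have := h2 i hi
    omega


theorem starts_card {k : ℕ} (hk : 1 ≤ k) :
    ∀ N j, (starts k N j).card = (N - j * (k - 1)).choose j := by
  intro N
  induction N using Nat.strong_induction_on with
  | _ N ih =>
    intro j
    match j with
    | 0 =>
      have : starts k N 0 = {∅} := by
        ext I
        rw [mem_starts hk, Finset.mem_singleton]
        constructor
        · rintro ⟨h, -, -⟩
          exact Finset.card_eq_zero.1 h
        · rintro rfl
          simp
      rw [this]
      simp
    | j + 1 =>
      by_cases hN : N < k
      · have he : starts k N (j+1) = ∅ := by
          rw [Finset.eq_empty_iff_forall_notMem]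
          intro I hI
          obtain ⟨hcard, hle, -⟩ := (mem_starts hk).1 hI
          have : I.Nonempty := Finset.card_pos.1 (by omega)
          obtain ⟨i, hi⟩ := this
          have := hle i hi
          omega
        rw [he, Finset.card_empty]
        have h1 : k - 1 ≤ (j+1) * (k-1) := Nat.le_mul_of_pos_left _ (by omega)
        rw [Nat.choose_eq_zero_of_lt (by omega)]
      · push_neg at hN
        -- split on membership of N - k
        have hsplit := Finset.card_filter_add_card_filter_not
          (s := starts k N (j+1)) (p := fun I => (N - k) ∈ I)
        have hin : ((starts k N (j+1)).filter (fun I => (N-k) ∈ I)).card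
            = (starts k (N-k) j).card := by
          refine Finset.card_nbij' (fun I => I.erase (N-k)) (fun J => insert (N-k) J) ?_ ?_ ?_ ?_
          · intro I hI
            obtain ⟨hI, hmem⟩ := Finset.mem_filter.1 hI
            obtain ⟨hcard, hle, hpw⟩ := (mem_starts hk).1 hI
            have hsmall : ∀ i ∈ I, i ≠ N - k → i + k ≤ N - k := by
              intro i hi hne
              have := hpw (by exact hi) (by exact hmem) hne
              have hik := hle i hi
              omega
            refine (mem_starts hk).2 ⟨by simp [Finset.card_erase_of_mem hmem, hcard], ?_, ?_⟩
            · intro i hi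
              exact hsmall i (Finset.mem_of_mem_erase hi) (Finset.ne_of_mem_erase hi)
            · exact hpw.mono (by simp [Finset.erase_subset])
          · intro J hJ
            obtain ⟨hcard, hle, hpw⟩ := (mem_starts hk).1 hJ
            have hnm : (N - k) ∉ J := by
              intro h
              have := hle _ h
              omega
            refine Finset.mem_filter.2 ⟨(mem_starts hk).2 ⟨?_, ?_, ?_⟩, Finset.mem_insert_self _ _⟩
            · rw [Finset.card_insert_of_notMem hnm, hcard]
            · intro i hi
              rcases Finset.mem_insert.1 hi with rfl | hi
              · omega
              · have := hle i hi; omega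
            · rw [Finset.coe_insert]
              refine Set.pairwise_insert.2 ⟨hpw, fun b hb hne => ?_⟩
              have := hle b hb
              constructor <;> omega
          · intro I hI
            exact Finset.insert_erase (Finset.mem_filter.1 hI).2
          · intro J hJ
            obtain ⟨hcard, hle, hpw⟩ := (mem_starts hk).1 hJ
            refine Finset.erase_insert (fun h => ?_)
            have := hle _ h
            omega
        have hout : ((starts k N (j+1)).filter (fun I => ¬ (N-k) ∈ I)) = starts k (N-1) (j+1) := by
          ext I
          simp only [Finset.mem_filter, mem_starts hk]
          constructor
          · rintro ⟨⟨hcard, hle, hpw⟩, hnm⟩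
            refine ⟨hcard, fun i hi => ?_, hpw⟩
            have h1 := hle i hi
            have h2 : i ≠ N - k := fun h => hnm (h ▸ hi)
            omega
          · rintro ⟨hcard, hle, hpw⟩
            refine ⟨⟨hcard, fun i hi => by have := hle i hi; omega, hpw⟩, fun h => ?_⟩
            have := hle _ h
            omega
        rw [hin, hout] at hsplit
        rw [← hsplit, ih (N-k) (by omega) j, ih (N-1) (by omega) (j+1)]
        -- Pascal step with truncated subtraction
        have e1 : (j+1) * (k-1) = j * (k-1) + (k-1) := by ring
        by_cases hM : (j+1) * (k-1) + 1 ≤ N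
        · have h2 : N - k - j * (k-1) = N - (j+1)*(k-1) - 1 := by omega
          have h3 : N - 1 - (j+1) * (k-1) = N - (j+1)*(k-1) - 1 := by omega
          have h4 : N - (j+1)*(k-1) = (N - (j+1)*(k-1) - 1) + 1 := by omega
          rw [h2, h3, h4, Nat.choose_succ_succ]
          simp
        · push_neg at hM
          have hj1 : 1 ≤ j := by
            rcases Nat.eq_zero_or_pos j with rfl | h
            · simp at e1; omega
            · exact h
          have c1 : N - k - j * (k-1) = 0 := by omega
          have c2 : N - 1 - (j+1)*(k-1) = 0 := by omega
          have c3 : N - (j+1)*(k-1) = 0 := by omega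
          rw [c1, c2, c3]
          have z1 : Nat.choose 0 j = 0 := Nat.choose_eq_zero_of_lt (by omega)
          have z2 : Nat.choose 0 (j+1) = 0 := Nat.choose_eq_zero_of_lt (by omega)
          rw [z1, z2]

-- helpers
theorem block_subset {k : ℕ} {s : Finset ℕ} {F : Finset (Finset ℕ)} (hF : F ∈ kparts k s)
    {B : Finset ℕ} (hB : B ∈ F) : B ⊆ s := by
  simpa using le_trans (Finset.le_sup (f := id) hB) (mem_kparts.1 hF).2.1.le

theorem ico_inj {k : ℕ} (hk : 1 ≤ k) {i i' : ℕ}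
    (h : Finset.Ico i (i + k) = Finset.Ico i' (i' + k)) : i = i' := by
  have h1 : i ∈ Finset.Ico i' (i' + k) := h ▸ Finset.mem_Ico.2 (by omega)
  have h2 : i' ∈ Finset.Ico i (i + k) := h.symm ▸ Finset.mem_Ico.2 (by omega)
  rw [Finset.mem_Ico] at h1 h2
  omega

theorem sdiff_eq_of_union {A B s : Finset ℕ} (h : A ∪ B = s) (hd : Disjoint A B) :
    s \ A = B := by
  rw [← h, Finset.union_sdiff_cancel_left hd]

theorem kparts_ncard {k : ℕ} {s : Finset ℕ} {F : Finset (Finset ℕ)} (hF : F ∈ kparts k s) :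
    k * F.card = s.card := by
  obtain ⟨hdisj, hsup, hcard⟩ := mem_kparts.1 hF
  rw [← hsup, Finset.sup_eq_biUnion, Finset.card_biUnion (fun B hB C hC hne => hdisj hB hC hne)]
  simp only [id]
  rw [Finset.sum_congr rfl hcard, Finset.sum_const, smul_eq_mul, mul_comm]

/-- The union of the marked short blocks equals the union of their starting intervals. -/
theorem biUnion_interval_eq {k : ℕ} (hk : 1 ≤ k) {N : ℕ} {S : Finset (Finset ℕ)}
    (hS : ∀ B ∈ S, (∃ i, B = Finset.Ico i (i + k)) ∧ B ⊆ Finset.range N) :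
    ((Finset.range N).filter (fun i => Finset.Ico i (i + k) ∈ S)).biUnion
      (fun i => Finset.Ico i (i + k)) = S.sup id := by
  ext x
  rw [Finset.mem_biUnion, Finset.mem_sup]
  constructor
  · rintro ⟨i, hi, hx⟩
    exact ⟨_, (Finset.mem_filter.1 hi).2, hx⟩
  · rintro ⟨B, hB, hx⟩
    obtain ⟨⟨i, rfl⟩, hBs⟩ := hS B hB
    refine ⟨i, Finset.mem_filter.2 ⟨?_, hB⟩, hx⟩
    exact hBs (Finset.mem_Ico.2 (by omega))

/-- Key bijection: pairs (partition, `j` marked short blocks) correspond to pairs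
(start set, partition of the complement). -/
theorem sigma_card_eq {k : ℕ} (hk : 1 ≤ k) (n j : ℕ) :
    ∑ F ∈ kparts k (Finset.range (k*n)),
        ((F.filter (fun B => ∃ i, B = Finset.Ico i (i + k))).powersetCard j).card
      = ∑ I ∈ starts k (k*n) j,
        (kparts k ((Finset.range (k*n)) \ I.biUnion (fun i => Finset.Ico i (i + k)))).card := by
  rw [← Finset.card_sigma, ← Finset.card_sigma]
  set s := Finset.range (k*n) with hs
  set P := fun B : Finset ℕ => ∃ i, B = Finset.Ico i (i + k) with hP
  refine Finset.card_nbij'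
    (fun x => ⟨s.filter (fun i => Finset.Ico i (i + k) ∈ x.2), x.1 \ x.2⟩)
    (fun y => ⟨y.2 ∪ y.1.image (fun i => Finset.Ico i (i + k)),
      y.1.image (fun i => Finset.Ico i (i + k))⟩) ?_ ?_ ?_ ?_
  · rintro ⟨F, S⟩ hx
    obtain ⟨hF, hSmem⟩ := Finset.mem_sigma.1 hx
    obtain ⟨hSsub, hScard⟩ := Finset.mem_powersetCard.1 hSmem
    have hSF : S ⊆ F := hSsub.trans (Finset.filter_subset _ _)
    have hSprop : ∀ B ∈ S, (∃ i, B = Finset.Ico i (i + k)) ∧ B ⊆ s := by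
      intro B hB
      exact ⟨(Finset.mem_filter.1 (hSsub hB)).2, block_subset hF (hSF hB)⟩
    set I := s.filter (fun i => Finset.Ico i (i + k) ∈ S) with hI
    have hIcard : I.card = j := by
      rw [← hScard]
      refine Finset.card_nbij (fun i => Finset.Ico i (i + k)) ?_ ?_ ?_
      · intro i hi
        exact (Finset.mem_filter.1 hi).2
      · intro i hi i' hi' h
        exact ico_inj hk h
      · intro B hB
        obtain ⟨⟨i, rfl⟩, hBs⟩ := hSprop B hB
        refine ⟨i, Finset.mem_coe.2 (Finset.mem_filter.2 ⟨?_, hB⟩), rfl⟩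
        exact hBs (Finset.mem_Ico.2 (by omega))
    have hIint : ∀ i ∈ I, i + k ≤ k*n := by
      intro i hi
      have hB := hSprop _ (Finset.mem_filter.1 hi).2
      have : i + k - 1 ∈ Finset.Ico i (i+k) := Finset.mem_Ico.2 (by omega)
      have := hB.2 this
      rw [hs, Finset.mem_range] at this
      omega
    have hdisjF := (mem_kparts.1 hF).1
    have hIstarts : I ∈ starts k (k*n) j := by
      refine (mem_starts hk).2 ⟨hIcard, hIint, ?_⟩
      intro i hi i' hi' hne
      have hBi : Finset.Ico i (i+k) ∈ F := hSF (Finset.mem_filter.1 hi).2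
      have hBi' : Finset.Ico i' (i'+k) ∈ F := hSF (Finset.mem_filter.1 hi').2
      have hBne : Finset.Ico i (i+k) ≠ Finset.Ico i' (i'+k) := fun h => hne (ico_inj hk h)
      have hd := hdisjF hBi hBi' hBne
      by_contra hcon
      push_neg at hcon
      have hm1 : max i i' ∈ Finset.Ico i (i+k) := Finset.mem_Ico.2 (by omega)
      have hm2 : max i i' ∈ Finset.Ico i' (i'+k) := Finset.mem_Ico.2 (by omega)
      exact (Finset.disjoint_left.1 hd hm1) hm2
    have hU : I.biUnion (fun i => Finset.Ico i (i + k)) = S.sup id :=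
      biUnion_interval_eq hk hSprop
    refine Finset.mem_sigma.2 ⟨hIstarts, ?_⟩
    -- F \ S ∈ kparts of complement
    obtain ⟨hdisj, hsup, hcard⟩ := mem_kparts.1 hF
    have hdisjS : Disjoint (S.sup id) ((F \ S).sup id) := by
      rw [Finset.disjoint_sup_left]
      intro B hB
      rw [Finset.disjoint_sup_right]
      intro C hC
      refine hdisj (hSF hB) (Finset.mem_sdiff.1 hC).1 ?_
      rintro rfl
      exact (Finset.mem_sdiff.1 hC).2 hB
    have hsupU : S.sup id ∪ (F \ S).sup id = s := by
      rw [← Finset.sup_eq_union, ← Finset.sup_union, Finset.union_sdiff_of_subset hSF, hsup]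
    rw [hU]
    refine mem_kparts.2 ⟨hdisj.subset (by rw [Finset.coe_sdiff]; exact Set.diff_subset), ?_,
      fun C hC => hcard C (Finset.mem_sdiff.1 hC).1⟩
    exact (sdiff_eq_of_union hsupU hdisjS).symm
  · rintro ⟨I, G⟩ hy
    obtain ⟨hI, hG⟩ := Finset.mem_sigma.1 hy
    obtain ⟨hIcard, hIint, hIpw⟩ := (mem_starts hk).1 hI
    set U := I.biUnion (fun i => Finset.Ico i (i + k)) with hUdef
    have hUs : U ⊆ s := by
      intro x hx
      obtain ⟨i, hi, hxi⟩ := Finset.mem_biUnion.1 hx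
      rw [Finset.mem_Ico] at hxi
      have := hIint i hi
      rw [hs, Finset.mem_range]
      omega
    obtain ⟨hGdisj, hGsup, hGcard⟩ := mem_kparts.1 hG
    have hGblock : ∀ B ∈ G, B ⊆ s \ U := fun B hB => block_subset hG hB
    set S' := I.image (fun i => Finset.Ico i (i + k)) with hS'
    have hS'int : ∀ B ∈ S', ∃ i ∈ I, B = Finset.Ico i (i + k) := by
      intro B hB
      obtain ⟨i, hi, rfl⟩ := Finset.mem_image.1 hB
      exact ⟨i, hi, rfl⟩
    have hS'sub : ∀ B ∈ S', B ⊆ U := by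
      intro B hB
      obtain ⟨i, hi, rfl⟩ := hS'int B hB
      intro x hx
      exact Finset.mem_biUnion.2 ⟨i, hi, hx⟩
    have hGS' : ∀ B ∈ G, ∀ C ∈ S', Disjoint B C := by
      intro B hB C hC
      exact Finset.disjoint_left.2
        (fun x hx hxC => (Finset.mem_sdiff.1 (hGblock B hB hx)).2 (hS'sub C hC hxC))
    have hS'disj : ∀ B ∈ S', ∀ C ∈ S', B ≠ C → Disjoint B C := by
      intro B hB C hC hne
      obtain ⟨i, hi, rfl⟩ := hS'int B hB
      obtain ⟨i', hi', rfl⟩ := hS'int C hC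
      have hii : i ≠ i' := fun h => hne (by rw [h])
      have := hIpw hi hi' hii
      rw [Finset.disjoint_left]
      intro x hx hx'
      rw [Finset.mem_Ico] at hx hx'
      omega
    have hF' : G ∪ S' ∈ kparts k s := by
      refine mem_kparts.2 ⟨?_, ?_, ?_⟩
      · intro B hB C hC hne
        simp only [Finset.coe_union, Set.mem_union, Finset.mem_coe] at hB hC
        rcases hB with hB | hB <;> rcases hC with hC | hC
        · exact hGdisj hB hC hne
        · exact hGS' B hB C hC
        · exact (hGS' C hC B hB).symm
        · exact hS'disj B hB C hC hne
      · rw [Finset.sup_union, hGsup]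
        have hsupS' : S'.sup id = U := by
          ext x
          rw [Finset.mem_sup, Finset.mem_biUnion]
          constructor
          · rintro ⟨B, hB, hx⟩
            obtain ⟨i, hi, rfl⟩ := hS'int B hB
            exact ⟨i, hi, hx⟩
          · rintro ⟨i, hi, hx⟩
            exact ⟨Finset.Ico i (i+k), Finset.mem_image.2 ⟨i, hi, rfl⟩, hx⟩
        rw [hsupS']
        simpa using Finset.sdiff_union_of_subset hUs
      · intro C hC
        rcases Finset.mem_union.1 hC with hC | hC
        · exact hGcard C hC
        · obtain ⟨i, hi, rfl⟩ := hS'int C hC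
          simp
    refine Finset.mem_sigma.2 ⟨hF', Finset.mem_powersetCard.2 ⟨?_, ?_⟩⟩
    · intro B hB
      refine Finset.mem_filter.2 ⟨Finset.mem_union_right _ hB, ?_⟩
      obtain ⟨i, hi, rfl⟩ := hS'int B hB
      exact ⟨i, rfl⟩
    · rw [Finset.card_image_of_injOn (fun i _ i' _ h => ico_inj hk h), hIcard]
  · -- left inverse : g (f x) = x
    rintro ⟨F, S⟩ hx
    obtain ⟨hF, hSmem⟩ := Finset.mem_sigma.1 hx
    obtain ⟨hSsub, hScard⟩ := Finset.mem_powersetCard.1 hSmem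
    have hSF : S ⊆ F := hSsub.trans (Finset.filter_subset _ _)
    have hS'S : (s.filter (fun i => Finset.Ico i (i + k) ∈ S)).image
        (fun i => Finset.Ico i (i + k)) = S := by
      ext B
      rw [Finset.mem_image]
      constructor
      · rintro ⟨i, hi, rfl⟩
        exact (Finset.mem_filter.1 hi).2
      · intro hB
        obtain ⟨i, rfl⟩ := (Finset.mem_filter.1 (hSsub hB)).2
        refine ⟨i, Finset.mem_filter.2 ⟨?_, hB⟩, rfl⟩
        exact block_subset hF (hSF hB) (Finset.mem_Ico.2 (by omega))
    have : (F \ S) ∪ S = F := Finset.sdiff_union_of_subset hSF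
    refine Sigma.ext ?_ (heq_of_eq ?_) <;> simp only
    · rw [hS'S, this]
    · rw [hS'S]
  · -- right inverse : f (g y) = y
    rintro ⟨I, G⟩ hy
    obtain ⟨hI, hG⟩ := Finset.mem_sigma.1 hy
    obtain ⟨hIcard, hIint, hIpw⟩ := (mem_starts hk).1 hI
    set U := I.biUnion (fun i => Finset.Ico i (i + k)) with hUdef
    set S' := I.image (fun i => Finset.Ico i (i + k)) with hS'
    have hII : s.filter (fun i => Finset.Ico i (i + k) ∈ S') = I := by
      ext i
      rw [Finset.mem_filter]
      constructor
      · rintro ⟨hi, hmem⟩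
        obtain ⟨i', hi', heq⟩ := Finset.mem_image.1 hmem
        rwa [ico_inj hk heq] at hi'
      · intro hi
        refine ⟨?_, Finset.mem_image.2 ⟨i, hi, rfl⟩⟩
        rw [hs, Finset.mem_range]
        have := hIint i hi
        omega
    have hdisjGS' : Disjoint G S' := by
      rw [Finset.disjoint_left]
      intro B hB hB'
      obtain ⟨i, hi, rfl⟩ := Finset.mem_image.1 hB'
      have h1 : Finset.Ico i (i+k) ⊆ s \ U := block_subset hG hB
      have h2 : i ∈ Finset.Ico i (i+k) := Finset.mem_Ico.2 (by omega)
      have h3 := h1 h2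
      rw [Finset.mem_sdiff] at h3
      exact h3.2 (Finset.mem_biUnion.2 ⟨i, hi, h2⟩)
    have hcancel : (G ∪ S') \ S' = G := by
      rw [Finset.union_comm, Finset.union_sdiff_cancel_left hdisjGS'.symm]
    refine Sigma.ext ?_ (heq_of_eq ?_) <;> simp only
    · exact hII
    · exact hcancel


theorem moment_formula {k : ℕ} (hk : 1 ≤ k) {n j : ℕ} (hj : j ≤ n) :
    k.factorial ^ (n - j) * (n - j).factorial *
      ∑ ℓ ∈ Finset.range (n+1), dCount k n ℓ * ℓ.descFactorial j
    = j.factorial * ((k*n - j*(k-1)).choose j * (k*(n-j)).factorial) := by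
  set P := fun B : Finset ℕ => ∃ i, B = Finset.Ico i (i + k) with hP
  have hmap : ∀ F ∈ kparts k (Finset.range (k*n)), (F.filter P).card ∈ Finset.range (n+1) := by
    intro F hF
    rw [Finset.mem_range]
    have h1 : (F.filter P).card ≤ F.card := Finset.card_filter_le _ _
    have h2 : k * F.card = k * n := by rw [kparts_ncard hF]; simp
    have h3 : F.card = n := Nat.eq_of_mul_eq_mul_left (by omega) h2
    omega
  have hA : ∑ ℓ ∈ Finset.range (n+1), dCount k n ℓ * ℓ.descFactorial j
      = ∑ F ∈ kparts k (Finset.range (k*n)), ((F.filter P).card).descFactorial j := by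
    rw [← Finset.sum_fiberwise_of_maps_to hmap (fun F => ((F.filter P).card).descFactorial j)]
    refine Finset.sum_congr rfl (fun ℓ hℓ => ?_)
    have hcon : ∑ F ∈ (kparts k (Finset.range (k*n))).filter (fun F => (F.filter P).card = ℓ),
        ((F.filter P).card).descFactorial j
        = ∑ _F ∈ (kparts k (Finset.range (k*n))).filter (fun F => (F.filter P).card = ℓ),
          ℓ.descFactorial j :=
      Finset.sum_congr rfl (fun F hF => by rw [(Finset.mem_filter.1 hF).2])
    rw [hcon, Finset.sum_const, smul_eq_mul, dCount_eq n ℓ hk]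
  have hB : ∀ F ∈ kparts k (Finset.range (k*n)),
      ((F.filter P).card).descFactorial j
        = j.factorial * ((F.filter P).powersetCard j).card := by
    intro F hF
    rw [Finset.card_powersetCard, Nat.descFactorial_eq_factorial_mul_choose]
  rw [hA, Finset.sum_congr rfl hB, ← Finset.mul_sum, sigma_card_eq hk n j]
  have hD : ∀ I ∈ starts k (k*n) j,
      k.factorial ^ (n - j) * (n - j).factorial *
        (kparts k ((Finset.range (k*n)) \ I.biUnion (fun i => Finset.Ico i (i + k)))).card
      = (k*(n-j)).factorial := by
    intro I hI
    obtain ⟨hIcard, hIint, hIpw⟩ := (mem_starts hk).1 hI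
    set U := I.biUnion (fun i => Finset.Ico i (i + k)) with hU
    have hUs : U ⊆ Finset.range (k*n) := by
      intro x hx
      obtain ⟨i, hi, hxi⟩ := Finset.mem_biUnion.1 hx
      rw [Finset.mem_Ico] at hxi
      have := hIint i hi
      rw [Finset.mem_range]
      omega
    have hUcard : U.card = j * k := by
      rw [hU, Finset.card_biUnion]
      · have hone : ∀ i ∈ I, (Finset.Ico i (i+k)).card = k := fun i _ => by
          rw [Nat.card_Ico]; omega
        rw [Finset.sum_congr rfl hone, Finset.sum_const, smul_eq_mul, hIcard]
      · intro i hi i' hi' hne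
        have := hIpw hi hi' hne
        rw [Function.onFun, Finset.disjoint_left]
        intro x hx hx'
        rw [Finset.mem_Ico] at hx hx'
        omega
    have hcompl : ((Finset.range (k*n)) \ U).card = k * (n - j) := by
      rw [Finset.card_sdiff_of_subset hUs, Finset.card_range, hUcard]
      have hkn : k * n = k * (n - j) + k * j := by
        rw [← Nat.mul_add]
        congr 1
        omega
      rw [mul_comm j k, hkn]
      simp
    exact kparts_card hk (n - j) _ hcompl
  have h5 : ∑ I ∈ starts k (k*n) j, k.factorial ^ (n - j) * (n - j).factorial *
      (kparts k ((Finset.range (k*n)) \ I.biUnion (fun i => Finset.Ico i (i + k)))).card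
      = (starts k (k*n) j).card * (k*(n-j)).factorial := by
    rw [Finset.sum_congr rfl hD, Finset.sum_const, smul_eq_mul]
  calc k.factorial ^ (n - j) * (n - j).factorial *
        (j.factorial * ∑ I ∈ starts k (k*n) j,
          (kparts k ((Finset.range (k*n)) \ I.biUnion (fun i => Finset.Ico i (i + k)))).card)
      = j.factorial * (k.factorial ^ (n - j) * (n - j).factorial * ∑ I ∈ starts k (k*n) j,
          (kparts k ((Finset.range (k*n)) \ I.biUnion (fun i => Finset.Ico i (i + k)))).card) := by
        ring
    _ = j.factorial * ∑ I ∈ starts k (k*n) j, k.factorial ^ (n - j) * (n - j).factorial *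
          (kparts k ((Finset.range (k*n)) \ I.biUnion (fun i => Finset.Ico i (i + k)))).card := by
        rw [Finset.mul_sum]
    _ = j.factorial * ((starts k (k*n) j).card * (k*(n-j)).factorial) := by rw [h5]
    _ = j.factorial * ((k*n - j*(k-1)).choose j * (k*(n-j)).factorial) := by
        rw [starts_card hk]

open Filter in
theorem tendsto_linear_ratio {k : ℕ} (hk : 1 ≤ k) (a b : ℝ) :
    Tendsto (fun n : ℕ => ((k : ℝ) * n + a) / ((k : ℝ) * n + b)) atTop (nhds 1) := by
  have hx : Tendsto (fun n : ℕ => a / (n : ℝ)) atTop (nhds 0) :=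
    tendsto_const_nhds.div_atTop tendsto_natCast_atTop_atTop
  have hy : Tendsto (fun n : ℕ => b / (n : ℝ)) atTop (nhds 0) :=
    tendsto_const_nhds.div_atTop tendsto_natCast_atTop_atTop
  have hk0 : (k : ℝ) ≠ 0 := by positivity
  have h1 : Tendsto (fun n : ℕ => ((k : ℝ) + a / n) / ((k : ℝ) + b / n)) atTop
      (nhds (((k : ℝ) + 0) / ((k : ℝ) + 0))) :=
    (tendsto_const_nhds.add hx).div (tendsto_const_nhds.add hy) (by simpa using hk0)
  rw [add_zero, div_self hk0] at h1
  refine h1.congr' ?_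
  filter_upwards [eventually_gt_atTop 0] with n hn
  have hn' : (n : ℝ) ≠ 0 := by positivity
  have e1 : (k : ℝ) + a / n = ((k : ℝ) * n + a) / n := by field_simp
  have e2 : (k : ℝ) + b / n = ((k : ℝ) * n + b) / n := by field_simp
  rw [e1, e2, div_div_div_cancel_right₀ hn']

open Filter in
theorem tendsto_prod_one {k : ℕ} (hk : 1 ≤ k) (m : ℕ) (a b : ℕ → ℝ) :
    Tendsto (fun n : ℕ => ∏ t ∈ Finset.range m, ((k : ℝ) * n - a t) / ((k : ℝ) * n - b t))
      atTop (nhds 1) := by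
  have h := tendsto_finset_prod (Finset.range m)
    (f := fun t (n : ℕ) => ((k : ℝ) * n + -(a t)) / ((k : ℝ) * n + -(b t)))
    (a := fun _ => (1 : ℝ)) (fun t _ => tendsto_linear_ratio hk (-(a t)) (-(b t)))
  simpa [sub_eq_add_neg] using h

open Filter in
/-- The asymptotic distribution of short chords is Poisson with mean
`λ = k! k^{1-k} n^{2-k}`: for each fixed `j ≥ 1`, the `j`-th factorial moment of the
number of short chords of a uniformly random linear `k`-chord diagram of length `kn`,
divided by `λ^j`, tends to `1` as `n → ∞`. -/
theorem stmt12 (k j : ℕ) (hk : 2 ≤ k) (hj : 1 ≤ j) :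
    Filter.Tendsto (fun n : ℕ =>
      ((∑ ℓ ∈ Finset.range (n + 1), (dCount k n ℓ : ℝ) * (Nat.descFactorial ℓ j : ℝ)) /
          (Nat.card {P : Finpartition (Finset.range (k * n)) //
            ∀ B ∈ P.parts, B.card = k} : ℝ)) /
        ((Nat.factorial k : ℝ) * (k : ℝ) ^ ((1 : ℤ) - (k : ℤ)) *
          (n : ℝ) ^ ((2 : ℤ) - (k : ℤ))) ^ j)
      Filter.atTop (nhds 1) := by
  have hk1 : 1 ≤ k := by omega
  have hlim : Tendsto (fun n : ℕ =>
      (∏ t ∈ Finset.range j, ((k:ℝ)*n - ((j:ℝ)*((k:ℝ)-1) + t)) / ((k:ℝ)*n - t)) *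
      ((∏ t ∈ Finset.range j, ((k:ℝ)*n - (k:ℝ)*t) / ((k:ℝ)*n - ((j:ℝ) + t))) *
       (∏ t ∈ Finset.range ((k-2)*j), ((k:ℝ)*n - 0) / ((k:ℝ)*n - ((2:ℝ)*j + t)))))
      atTop (nhds 1) := by
    have h1 := tendsto_prod_one hk1 j (fun t => (j:ℝ)*((k:ℝ)-1) + t) (fun t => (t:ℝ))
    have h2 := tendsto_prod_one hk1 j (fun t => (k:ℝ)*t) (fun t => (j:ℝ) + t)
    have h3 := tendsto_prod_one hk1 ((k-2)*j) (fun _ => (0:ℝ)) (fun t => (2:ℝ)*j + t)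
    simpa using h1.mul (h2.mul h3)
  refine hlim.congr' ?_
  filter_upwards [eventually_ge_atTop (2*j + 2)] with n hn
  -- ℕ facts
  have hjn : j ≤ n := by omega
  have hjk : j*(k-1) + j = j*k := by rw [← Nat.mul_succ]; congr 1; omega
  have hM : j*(k-1) + j ≤ k*n := by
    rw [hjk, mul_comm]
    exact Nat.mul_le_mul_left k (by omega)
  have hMj : j ≤ k*n - j*(k-1) := Nat.le_sub_of_add_le (by rwa [add_comm] at hM)
  have hMle : j*(k-1) ≤ k*n := le_trans (Nat.le_add_right _ _) hM
  have hkj : k*j ≤ k*n := Nat.mul_le_mul_left k (by omega)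
  have hknj : k*(n-j) + k*j = k*n := by rw [← Nat.mul_add]; congr 1; omega
  -- ℕ identities
  have mfN := moment_formula hk1 hjn
  have dj : j.factorial * ((k*n - j*(k-1)).choose j) = (k*n - j*(k-1)).descFactorial j :=
    (Nat.descFactorial_eq_factorial_mul_choose _ _).symm
  have mfN' : k.factorial ^ (n - j) * (n - j).factorial *
      (∑ ℓ ∈ Finset.range (n+1), dCount k n ℓ * ℓ.descFactorial j)
      = (k*n - j*(k-1)).descFactorial j * (k*(n-j)).factorial := by
    rw [mfN, ← mul_assoc, dj]
  have totN := kparts_card hk1 n (Finset.range (k*n)) (by rw [Finset.card_range])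
  have d1 : (k*(n-j)).factorial * (k*n).descFactorial (k*j) = (k*n).factorial := by
    have := Nat.factorial_mul_descFactorial hkj
    rwa [show k*n - k*j = k*(n-j) by omega] at this
  have d2 : (n-j).factorial * n.descFactorial j = n.factorial :=
    Nat.factorial_mul_descFactorial hjn
  -- ℝ abbreviations
  set A : ℝ := (k.factorial : ℝ) with hA
  set Sn : ℝ := ((∑ ℓ ∈ Finset.range (n+1), dCount k n ℓ * ℓ.descFactorial j : ℕ) : ℝ) with hSn
  set Tc : ℝ := ((kparts k (Finset.range (k*n))).card : ℝ) with hTc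
  set DM : ℝ := (((k*n - j*(k-1)).descFactorial j : ℕ) : ℝ) with hDM
  set DN : ℝ := ((n.descFactorial j : ℕ) : ℝ) with hDN
  set DK : ℝ := (((k*n).descFactorial (k*j) : ℕ) : ℝ) with hDK
  set F1 : ℝ := ((n-j).factorial : ℝ) with hF1
  set F2 : ℝ := (n.factorial : ℝ) with hF2
  set F3 : ℝ := ((k*(n-j)).factorial : ℝ) with hF3
  set F4 : ℝ := ((k*n).factorial : ℝ) with hF4
  have r1 : A ^ (n-j) * F1 * Sn = DM * F3 := by
    rw [hA, hF1, hSn, hDM, hF3]; exact_mod_cast congrArg (Nat.cast : ℕ → ℝ) mfN'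
  have r2 : A ^ n * F2 * Tc = F4 := by
    rw [hA, hF2, hTc, hF4]; exact_mod_cast congrArg (Nat.cast : ℕ → ℝ) totN
  have r3 : F3 * DK = F4 := by
    rw [hF3, hDK, hF4]; exact_mod_cast congrArg (Nat.cast : ℕ → ℝ) d1
  have r4 : F1 * DN = F2 := by
    rw [hF1, hDN, hF2]; exact_mod_cast congrArg (Nat.cast : ℕ → ℝ) d2
  have hpow : A ^ (n-j) * A ^ j = A ^ n := by rw [← pow_add]; congr 1; omega
  -- positivity
  have hApos : (0:ℝ) < A := by rw [hA]; exact_mod_cast (k.factorial_pos)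
  have hF1pos : (0:ℝ) < F1 := by rw [hF1]; exact_mod_cast ((n-j).factorial_pos)
  have hF2pos : (0:ℝ) < F2 := by rw [hF2]; exact_mod_cast (n.factorial_pos)
  have hDKpos : (0:ℝ) < DK := by
    rw [hDK]
    have hne : (k*n).descFactorial (k*j) ≠ 0 := by
      rw [Ne, Nat.descFactorial_eq_zero_iff_lt]
      omega
    exact_mod_cast Nat.pos_of_ne_zero hne
  have hTcN : (kparts k (Finset.range (k*n))).card ≠ 0 := by
    intro h
    rw [h, Nat.mul_zero] at totN
    exact Nat.factorial_ne_zero (k*n) totN.symm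
  have hTcpos : (0:ℝ) < Tc := by
    rw [hTc]
    exact_mod_cast Nat.pos_of_ne_zero hTcN
  have claim : Sn * DK * ((A ^ (n-j) * F1) * (A ^ n * F2))
      = (DM * (A ^ j * DN) * Tc) * ((A ^ (n-j) * F1) * (A ^ n * F2)) := by
    linear_combination (DK * A^n * F2) * r1 + (DM * A^n * F2) * r3
      - (DM * A^j * DN * A^(n-j) * F1) * r2 - DM * F4 * F2 * hpow
      - DM * F4 * A^j * A^(n-j) * r4
  have key : Sn * DK = DM * (A ^ j * DN) * Tc :=
    mul_right_cancel₀ (show ((A ^ (n-j) * F1) * (A ^ n * F2)) ≠ 0 by positivity) claim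
  have hq : Sn / Tc = DM * (A ^ j * DN) / DK := by
    rw [div_eq_div_iff (ne_of_gt hTcpos) (ne_of_gt hDKpos)]
    linear_combination key
  -- zpow rewriting
  have hz1 : (k:ℝ) ^ ((1:ℤ) - (k:ℤ)) = (((k:ℝ) ^ ((k-1 : ℕ))))⁻¹ := by
    rw [show (1:ℤ) - (k:ℤ) = -(((k-1 : ℕ) : ℤ)) by push_cast; omega, zpow_neg, zpow_natCast]
  have hz2 : (n:ℝ) ^ ((2:ℤ) - (k:ℤ)) = (((n:ℝ) ^ ((k-2 : ℕ))))⁻¹ := by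
    rw [show (2:ℤ) - (k:ℤ) = -(((k-2 : ℕ) : ℤ)) by push_cast; omega, zpow_neg, zpow_natCast]
  -- product computations
  have h2jkn : j + j ≤ k*n := by
    have h1 : 2*j ≤ k*j := mul_le_mul_left hk j
    calc j + j = 2*j := (two_mul j).symm
      _ ≤ k*j := h1
      _ ≤ k*n := hkj
  have hsplit2 : 2*j + (k-2)*j = k*j := by
    have h2 : (k-2) + 2 = k := by omega
    calc 2*j + (k-2)*j = ((k-2) + 2)*j := by ring
      _ = k*j := by rw [h2]
  have hkm1 : (((k-1 : ℕ)) : ℝ) = (k:ℝ) - 1 := by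
    rw [Nat.cast_sub hk1]; norm_num
  have hP1 : ∏ t ∈ Finset.range j, ((k:ℝ)*n - ((j:ℝ)*((k:ℝ)-1) + t)) = DM := by
    rw [hDM, Nat.descFactorial_eq_prod_range, Nat.cast_prod]
    refine Finset.prod_congr rfl (fun t ht => ?_)
    rw [Finset.mem_range] at ht
    rw [Nat.cast_sub (le_trans ht.le hMj), Nat.cast_sub hMle]
    simp only [Nat.cast_mul]
    rw [hkm1]
    push_cast
    ring
  have hP2 : ∏ t ∈ Finset.range j, ((k:ℝ)*n - (k:ℝ)*t) = (k:ℝ)^j * DN := by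
    have : ∀ t ∈ Finset.range j, ((k:ℝ)*n - (k:ℝ)*t) = (k:ℝ) * ((n:ℝ) - t) :=
      fun t _ => by ring
    rw [Finset.prod_congr rfl this, Finset.prod_mul_distrib, Finset.prod_const,
      Finset.card_range]
    congr 1
    rw [hDN, Nat.descFactorial_eq_prod_range, Nat.cast_prod]
    refine Finset.prod_congr rfl (fun t ht => ?_)
    rw [Finset.mem_range] at ht
    rw [Nat.cast_sub (by omega)]
  have hP3 : ∏ t ∈ Finset.range ((k-2)*j), ((k:ℝ)*n - 0) = ((k:ℝ)*n)^((k-2)*j) := by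
    rw [Finset.prod_congr rfl (fun t _ => by rw [sub_zero]), Finset.prod_const,
      Finset.card_range]
  have hDen : (∏ t ∈ Finset.range j, ((k:ℝ)*n - t)) *
      ((∏ t ∈ Finset.range j, ((k:ℝ)*n - ((j:ℝ) + t))) *
       (∏ t ∈ Finset.range ((k-2)*j), ((k:ℝ)*n - ((2:ℝ)*j + t)))) = DK := by
    have hsplit : k*j = j + (j + (k-2)*j) := by
      rw [← hsplit2]
      ring
    rw [hDK, Nat.descFactorial_eq_prod_range, Nat.cast_prod, hsplit,
      Finset.prod_range_add, Finset.prod_range_add]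
    congr 1
    · refine Finset.prod_congr rfl (fun t ht => ?_)
      rw [Finset.mem_range] at ht
      have hle : t ≤ k*n := le_trans ht.le (le_trans (Nat.le_add_right j j) h2jkn)
      rw [Nat.cast_sub hle]
      push_cast
      ring
    congr 1
    · refine Finset.prod_congr rfl (fun t ht => ?_)
      rw [Finset.mem_range] at ht
      have hle : j + t ≤ k*n := le_trans (Nat.add_le_add_left ht.le j) h2jkn
      rw [Nat.cast_sub hle]
      push_cast
      ring
    · refine Finset.prod_congr rfl (fun t ht => ?_)
      rw [Finset.mem_range] at ht
      have hle : j + (j + t) ≤ k*n := by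
        refine le_trans ?_ (hsplit2 ▸ hkj)
        have := Nat.add_le_add_left ht.le (2*j)
        omega
      rw [Nat.cast_sub hle]
      push_cast
      ring
  -- assemble
  have hcast : (∑ ℓ ∈ Finset.range (n + 1), (dCount k n ℓ : ℝ) * (Nat.descFactorial ℓ j : ℝ))
      = Sn := by
    rw [hSn]
    push_cast
    rfl
  have hcard : (Nat.card {P : Finpartition (Finset.range (k * n)) //
      ∀ B ∈ P.parts, B.card = k} : ℝ) = Tc := by
    rw [hTc, card_kparts_eq k hk1]
  rw [Finset.prod_div_distrib, Finset.prod_div_distrib, Finset.prod_div_distrib,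
    hP1, hP2, hP3, hcast, hcard, hq, hz1, hz2]
  have hkpos : (0:ℝ) < (k:ℝ) := by positivity
  have hnpos : (0:ℝ) < (n:ℝ) := by
    have : 0 < n := by omega
    positivity
  have hknpow : ((k:ℝ)*n)^((k-2)*j) = (k:ℝ)^((k-2)*j) * (n:ℝ)^((k-2)*j) := mul_pow _ _ _
  have hexpk : (k:ℝ)^j * (k:ℝ)^((k-2)*j) = (k:ℝ)^((k-1)*j) := by
    rw [← pow_add]
    congr 1
    have h2 : k - 1 = (k-2) + 1 := by omega
    rw [h2]
    ring
  have hlt : ∀ x : ℕ, x < k*n → (0:ℝ) < (k:ℝ)*n - x := by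
    intro x h
    have : (x:ℝ) < ((k*n : ℕ) : ℝ) := by exact_mod_cast h
    push_cast at this
    linarith
  have hD1pos : (0:ℝ) < ∏ x ∈ Finset.range j, ((k:ℝ)*n - x) := by
    refine Finset.prod_pos (fun x hx => ?_)
    rw [Finset.mem_range] at hx
    exact hlt x (by omega)
  have hD2pos : (0:ℝ) < ∏ x ∈ Finset.range j, ((k:ℝ)*n - ((j:ℝ) + x)) := by
    refine Finset.prod_pos (fun x hx => ?_)
    rw [Finset.mem_range] at hx
    have h1 : ((j + x : ℕ) : ℝ) = (j:ℝ) + x := by push_cast; ring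
    rw [← h1]
    exact hlt (j + x) (by omega)
  have hD3pos : (0:ℝ) < ∏ x ∈ Finset.range ((k-2)*j), ((k:ℝ)*n - ((2:ℝ)*j + x)) := by
    refine Finset.prod_pos (fun x hx => ?_)
    rw [Finset.mem_range] at hx
    have h1 : ((2*j + x : ℕ) : ℝ) = (2:ℝ)*j + x := by push_cast; ring
    rw [← h1]
    exact hlt (2*j + x) (by omega)
  rw [div_mul_div_comm, div_mul_div_comm, hDen]
  have hrhs : (A * ((k:ℝ)^(k-1))⁻¹ * ((n:ℝ)^(k-2))⁻¹)^j
      = A^j * ((k:ℝ)^((k-1)*j))⁻¹ * ((n:ℝ)^((k-2)*j))⁻¹ := by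
    rw [mul_pow, mul_pow, inv_pow, inv_pow, ← pow_mul, ← pow_mul]
  rw [hrhs, hknpow, ← hexpk]
  have hAne : A ≠ 0 := hApos.ne'
  have hkne : (k:ℝ) ≠ 0 := hkpos.ne'
  have hnne : (n:ℝ) ≠ 0 := hnpos.ne'
  have hDKne : DK ≠ 0 := hDKpos.ne'
  field_simp
end

section
/- For every fixed j ≥ 0 and k ≥ 2, as n → ∞, the ratio ((k(n-j))!/((k!)^{n-j}(n-j)!)) · C(kn - j(k-1), j) / ((kn)!/((k!)^n n!)) is asymptotic to (k! k^{1-k} n^{2-k})^j / j!. -/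
/-!
Cancelling factorials, the ratio equals `(k!)^j · n^{(j)} · C(kn - j(k-1), j) / (kn)^{(kj)}` with
falling factorials `m^{(r)}`. Each falling factorial and the binomial coefficient is asymptotic to
its leading monomial, `n^j`, `(kn)^{kj}` and `(kn)^j / j!`, and these multiply to `λ^j / j!`.
-/

open Filter Asymptotics

theorem isEquivalent_natCast_sub (c : ℕ) :
    (fun n : ℕ => ((n - c : ℕ) : ℝ)) ~[atTop] (fun n : ℕ => (n : ℝ)) := by
  have hconst : (fun _ : ℕ => -(c : ℝ)) =o[atTop] (fun n : ℕ => (n : ℝ)) :=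
    (isLittleO_const_id_atTop _).comp_tendsto tendsto_natCast_atTop_atTop
  refine hconst.congr' ?_ EventuallyEq.rfl
  filter_upwards [eventually_ge_atTop c] with n hn
  simp [Nat.cast_sub hn]

theorem isEquivalent_choose_sub (j c : ℕ) :
    (fun n : ℕ => ((n - c).choose j : ℝ)) ~[atTop] (fun n : ℕ => (n : ℝ) ^ j / j.factorial) :=
  ((isEquivalent_choose j).comp_tendsto (tendsto_sub_atTop_nat c)).trans
    (((isEquivalent_natCast_sub c).pow j).div IsEquivalent.refl)

theorem isEquivalent_descFactorial_const_mul {k : ℕ} (hk : 0 < k) (m : ℕ) :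
    (fun n : ℕ => ((k * n).descFactorial m : ℝ)) ~[atTop] (fun n : ℕ => ((k : ℝ) * n) ^ m) := by
  simpa [Function.comp_def] using
    (isEquivalent_descFactorial m).comp_tendsto (tendsto_id.const_mul_atTop' hk)

theorem isEquivalent_choose_const_mul_sub {k : ℕ} (hk : 0 < k) (j c : ℕ) :
    (fun n : ℕ => ((k * n - c).choose j : ℝ)) ~[atTop]
      (fun n : ℕ => ((k : ℝ) * n) ^ j / j.factorial) := by
  simpa [Function.comp_def] using
    (isEquivalent_choose_sub j c).comp_tendsto (tendsto_id.const_mul_atTop' hk)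

/-- The number of partitions of a `k * n`-set into `n` blocks of size `k`, i.e. of linear
`k`-chord diagrams of length `k * n`. -/
noncomputable def blockPartitionCount (k n : ℕ) : ℝ :=
  (k * n).factorial / ((k.factorial : ℝ) ^ n * n.factorial)

theorem blockPartitionCount_sub_div {k j n : ℕ} (h : j ≤ n) :
    blockPartitionCount k (n - j) / blockPartitionCount k n =
      (k.factorial : ℝ) ^ j * n.descFactorial j / (k * n).descFactorial (k * j) := by
  have hn : ((n.factorial : ℕ) : ℝ) = (n - j).factorial * n.descFactorial j := by
    rw [← Nat.factorial_mul_descFactorial h, Nat.cast_mul]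
  have hkn : (((k * n).factorial : ℕ) : ℝ) =
      (k * (n - j)).factorial * (k * n).descFactorial (k * j) := by
    rw [Nat.mul_sub, ← Nat.factorial_mul_descFactorial (Nat.mul_le_mul_left k h), Nat.cast_mul]
  have hpow : (k.factorial : ℝ) ^ n = (k.factorial : ℝ) ^ (n - j) * (k.factorial : ℝ) ^ j := by
    rw [← pow_add, Nat.sub_add_cancel h]
  have hdesc : ((k * n).descFactorial (k * j) : ℝ) ≠ 0 := by
    exact_mod_cast (Nat.descFactorial_pos.mpr (Nat.mul_le_mul_left k h)).ne'
  unfold blockPartitionCount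
  rw [hn, hkn, hpow]
  field_simp

/-- For fixed `j ≥ 0` and `k ≥ 2`, as `n → ∞`, the `j`-th binomial moment
`((k(n-j))!/((k!)^{n-j}(n-j)!)) C(kn - j(k-1), j) / ((kn)!/((k!)^n n!))` is asymptotic to
`λ^j / j!` with `λ = k! k^{1-k} n^{2-k}`. -/
theorem stmt13 (k j : ℕ) (hk : 2 ≤ k) :
    Asymptotics.IsEquivalent Filter.atTop
      (fun n : ℕ =>
        ((Nat.factorial (k * (n - j)) : ℝ) /
            ((Nat.factorial k : ℝ) ^ (n - j) * (Nat.factorial (n - j) : ℝ)) *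
          (Nat.choose (k * n - j * (k - 1)) j : ℝ)) /
        ((Nat.factorial (k * n) : ℝ) /
          ((Nat.factorial k : ℝ) ^ n * (Nat.factorial n : ℝ))))
      (fun n : ℕ =>
        ((Nat.factorial k : ℝ) * (k : ℝ) ^ ((1 : ℤ) - (k : ℤ)) *
            (n : ℝ) ^ ((2 : ℤ) - (k : ℤ))) ^ j /
          (Nat.factorial j : ℝ)) := by
  have hk0 : 0 < k := by omega
  have hmoment := (((IsEquivalent.refl (u := fun _ : ℕ => (k.factorial : ℝ) ^ j)).mul
    (isEquivalent_descFactorial j)).div (isEquivalent_descFactorial_const_mul hk0 (k * j))).mul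
    (isEquivalent_choose_const_mul_sub hk0 j (j * (k - 1)))
  refine (hmoment.congr_left ?_).congr_right ?_
  · filter_upwards [eventually_ge_atTop j] with n hn
    change _ = blockPartitionCount k (n - j) * _ / blockPartitionCount k n
    rw [mul_div_right_comm (blockPartitionCount k (n - j)), blockPartitionCount_sub_div hn]
    rfl
  · filter_upwards [eventually_ne_atTop 0] with n hn
    have hnR : (n : ℝ) ≠ 0 := by exact_mod_cast hn
    have hkR : (k : ℝ) ≠ 0 := by exact_mod_cast hk0.ne'
    simp only [Pi.mul_apply, Pi.div_apply]
    rw [zpow_sub₀ hkR, zpow_sub₀ hnR, zpow_natCast, zpow_natCast, zpow_one, pow_mul]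
    simp only [mul_pow, div_pow, ← pow_mul]
    field_simp
    ring
end

section
/- The bivariate generating function T(x,y) = Σ_{m,ℓ ≥ 0} T_{m,ℓ} x^m y^ℓ of non-crossing linear k-chord diagrams counted by size m and number of short chords ℓ satisfies the functional equation T(x,y) - 1 = x·T(x,y)^k - x(1-y)·T(x,y). -/
/-!
A diagram with `m + 1` blocks is determined by the block `B₀` through `0`, say
`0 = β₀ < ⋯ < β_{k-1}`, together with the `k` diagrams filling the gaps `(β_j, β_{j+1})`
(where `β_k = k (m + 1)`), each shifted down to start at `0`; conversely any `k` diagrams of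
total size `m` glue back along such a spine. The short blocks of the glued diagram are those of
the pieces, plus `B₀` itself exactly when all pieces but the last are empty, and those tuples are
just the diagrams of size `m`. Hence `T_{m+1} = [xᵐ] Tᵏ - T_m + y T_m` as polynomials in `y`,
that is `T = 1 + x (Tᵏ - T + y T)`.
-/

open scoped Classical

/-- Two blocks cross if there are `a < b < c < d` with `a, c` in one block and
`b, d` in the other. -/
def Cross (B B' : Finset ℕ) : Prop :=
  ∃ a b c d : ℕ, a < b ∧ b < c ∧ c < d ∧
    ((a ∈ B ∧ c ∈ B ∧ b ∈ B' ∧ d ∈ B') ∨ (a ∈ B' ∧ c ∈ B' ∧ b ∈ B ∧ d ∈ B))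

/-- `Tcount k m ℓ` is the number of non-crossing linear `k`-chord diagrams of length
`k*m` (non-crossing partitions of `{0,...,k*m-1}` into blocks of size `k`) with exactly
`ℓ` short chords (blocks of `k` consecutive vertices). -/
noncomputable def Tcount (k m ℓ : ℕ) : ℕ :=
  Nat.card {P : Finpartition (Finset.range (k * m)) //
    (∀ B ∈ P.parts, B.card = k) ∧
    (∀ B ∈ P.parts, ∀ B' ∈ P.parts, B ≠ B' → ¬ Cross B B') ∧
    (P.parts.filter (fun B => ∃ i, B = Finset.Ico i (i + k))).card = ℓ}

/-- The bivariate generating function `T(x,y) = Σ T_{m,ℓ} x^m y^ℓ`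
(with `x = X 0`, `y = X 1`). -/
noncomputable def Tser (k : ℕ) : MvPowerSeries (Fin 2) ℚ :=
  fun d => (Tcount k (d 0) (d 1) : ℚ)

open Finset

theorem cross_comm {B B' : Finset ℕ} : Cross B B' ↔ Cross B' B := by
  constructor <;> rintro ⟨a, b, c, d, hab, hbc, hcd, h⟩ <;>
    exact ⟨a, b, c, d, hab, hbc, hcd, h.symm⟩

theorem not_cross_of_forall_lt {B B' : Finset ℕ} (h : ∀ x ∈ B, ∀ y ∈ B', x < y) :
    ¬ Cross B B' := by
  rintro ⟨a, b, c, d, -, hbc, hcd, ⟨-, hc, hb, -⟩ | ⟨-, hc, -, hd⟩⟩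
  · exact absurd (h c hc b hb) (by omega)
  · exact absurd (h d hd c hc) (by omega)

theorem not_cross_of_separated {B B' : Finset ℕ} {u v : ℕ}
    (hB' : ∀ y ∈ B', u < y ∧ y < v) (hB : ∀ x ∈ B, x ≤ u ∨ v ≤ x) : ¬ Cross B B' := by
  rintro ⟨a, b, c, d, hab, hbc, hcd, ⟨-, hc, hb, hd⟩ | ⟨ha, hc, hb, -⟩⟩
  · have := hB' b hb; have := hB' d hd; have := hB c hc; omega
  · have := hB' a ha; have := hB' c hc; have := hB b hb; omega

theorem cross_image_iff {f : ℕ → ℕ} (hf : StrictMono f) {B B' : Finset ℕ} :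
    Cross (B.image f) (B'.image f) ↔ Cross B B' := by
  simp only [Cross, mem_image]
  constructor
  · rintro ⟨_, _, _, _, hab, hbc, hcd, ⟨⟨a, ha, rfl⟩, ⟨c, hc, rfl⟩, ⟨b, hb, rfl⟩, ⟨d, hd, rfl⟩⟩ |
      ⟨⟨a, ha, rfl⟩, ⟨c, hc, rfl⟩, ⟨b, hb, rfl⟩, ⟨d, hd, rfl⟩⟩⟩
    · exact ⟨a, b, c, d, hf.lt_iff_lt.1 hab, hf.lt_iff_lt.1 hbc, hf.lt_iff_lt.1 hcd,
        Or.inl ⟨ha, hc, hb, hd⟩⟩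
    · exact ⟨a, b, c, d, hf.lt_iff_lt.1 hab, hf.lt_iff_lt.1 hbc, hf.lt_iff_lt.1 hcd,
        Or.inr ⟨ha, hc, hb, hd⟩⟩
  · rintro ⟨a, b, c, d, hab, hbc, hcd, ⟨ha, hc, hb, hd⟩ | ⟨ha, hc, hb, hd⟩⟩
    · exact ⟨f a, f b, f c, f d, hf hab, hf hbc, hf hcd,
        Or.inl ⟨⟨a, ha, rfl⟩, ⟨c, hc, rfl⟩, ⟨b, hb, rfl⟩, ⟨d, hd, rfl⟩⟩⟩
    · exact ⟨f a, f b, f c, f d, hf hab, hf hbc, hf hcd,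
        Or.inr ⟨⟨a, ha, rfl⟩, ⟨c, hc, rfl⟩, ⟨b, hb, rfl⟩, ⟨d, hd, rfl⟩⟩⟩

structure IsDiagram (k : ℕ) (S : Finset ℕ) (F : Finset (Finset ℕ)) : Prop where
  card_eq : ∀ B ∈ F, B.card = k
  pairwiseDisjoint : (F : Set (Finset ℕ)).PairwiseDisjoint id
  not_cross : ∀ B ∈ F, ∀ B' ∈ F, B ≠ B' → ¬ Cross B B'
  sup_eq : F.sup id = S

namespace IsDiagram

variable {k : ℕ} {S : Finset ℕ} {F : Finset (Finset ℕ)}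

theorem subset (hF : IsDiagram k S F) {B : Finset ℕ} (hB : B ∈ F) : B ⊆ S :=
  hF.sup_eq ▸ le_sup (f := id) hB

theorem nonempty (hF : IsDiagram k S F) (hk : 0 < k) {B : Finset ℕ} (hB : B ∈ F) :
    B.Nonempty :=
  card_pos.1 (hF.card_eq B hB ▸ hk)

theorem card_mul (hF : IsDiagram k S F) : F.card * k = S.card := by
  rw [← hF.sup_eq, sup_eq_biUnion, card_biUnion fun B hB B' hB' hne =>
    hF.pairwiseDisjoint (mem_coe.2 hB) (mem_coe.2 hB') hne]
  simp [sum_congr rfl hF.card_eq]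

theorem insert (hF : IsDiagram k S F) {B : Finset ℕ} (hB : B.card = k) (hBS : Disjoint B S)
    (hcross : ∀ B' ∈ F, ¬ Cross B B') : IsDiagram k (B ∪ S) (insert B F) where
  card_eq := by
    simp only [mem_insert, forall_eq_or_imp]
    exact ⟨hB, hF.card_eq⟩
  pairwiseDisjoint := by
    rw [coe_insert]
    refine hF.pairwiseDisjoint.insert fun B' hB' _ => ?_
    exact hBS.mono_right (hF.subset hB')
  not_cross := by
    simp only [mem_insert, forall_eq_or_imp]
    exact ⟨⟨fun h => absurd rfl h, fun B' hB' _ => hcross B' hB'⟩,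
      fun B₁ hB₁ => ⟨fun _ h => hcross B₁ hB₁ (cross_comm.1 h), hF.not_cross B₁ hB₁⟩⟩
  sup_eq := by rw [sup_insert, hF.sup_eq]; rfl

theorem biUnion {ι : Type*} {s : Finset ι} {S : ι → Finset ℕ} {F : ι → Finset (Finset ℕ)}
    (hF : ∀ i ∈ s, IsDiagram k (S i) (F i)) (hS : (s : Set ι).PairwiseDisjoint S)
    (hcross : ∀ i ∈ s, ∀ j ∈ s, i ≠ j → ∀ B ∈ F i, ∀ B' ∈ F j, ¬ Cross B B') :
    IsDiagram k (s.biUnion S) (s.biUnion F) where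
  card_eq B hB := by
    obtain ⟨i, hi, hB⟩ := mem_biUnion.1 hB
    exact (hF i hi).card_eq B hB
  pairwiseDisjoint B hB B' hB' hne := by
    obtain ⟨i, hi, hB⟩ := mem_biUnion.1 hB
    obtain ⟨j, hj, hB'⟩ := mem_biUnion.1 hB'
    obtain rfl | hij := eq_or_ne i j
    · exact (hF i hi).pairwiseDisjoint hB hB' hne
    · exact (hS hi hj hij).mono ((hF i hi).subset hB) ((hF j hj).subset hB')
  not_cross B hB B' hB' hne := by
    obtain ⟨i, hi, hB⟩ := mem_biUnion.1 hB
    obtain ⟨j, hj, hB'⟩ := mem_biUnion.1 hB'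
    obtain rfl | hij := eq_or_ne i j
    · exact (hF i hi).not_cross B hB B' hB' hne
    · exact hcross i hi j hj hij B hB B' hB'
  sup_eq := by
    rw [sup_biUnion]
    exact (sup_congr rfl fun i hi => (hF i hi).sup_eq).trans (sup_eq_biUnion s S)

theorem filter_subset (hF : IsDiagram k S F) {T : Finset ℕ}
    (hT : ∀ x ∈ T, ∃ B ∈ F, x ∈ B ∧ B ⊆ T) : IsDiagram k T (F.filter (· ⊆ T)) where
  card_eq B hB := hF.card_eq B (mem_filter.1 hB).1
  pairwiseDisjoint := hF.pairwiseDisjoint.subset (coe_subset.2 (Finset.filter_subset _ _))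
  not_cross B hB B' hB' := hF.not_cross B (mem_filter.1 hB).1 B' (mem_filter.1 hB').1
  sup_eq := by
    refine le_antisymm (Finset.sup_le fun B hB => (mem_filter.1 hB).2) fun x hx => ?_
    obtain ⟨B, hB, hxB, hBT⟩ := hT x hx
    exact le_sup (f := id) (mem_filter.2 ⟨hB, hBT⟩) hxB

theorem exists_mem (hF : IsDiagram k S F) {x : ℕ} (hx : x ∈ S) : ∃ B ∈ F, x ∈ B := by
  rwa [← hF.sup_eq, mem_sup] at hx

theorem card_eq_of_range {m : ℕ} (hk : 0 < k) (hF : IsDiagram k (range (k * m)) F) :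
    F.card = m := by
  have := hF.card_mul
  rw [card_range, mul_comm] at this
  exact Nat.eq_of_mul_eq_mul_left hk this

theorem disjoint (hk : 0 < k) {S' : Finset ℕ} {F' : Finset (Finset ℕ)}
    (hF : IsDiagram k S F) (hF' : IsDiagram k S' F') (hS : Disjoint S S') : Disjoint F F' := by
  refine disjoint_left.2 fun B hB hB' => ?_
  obtain ⟨x, hx⟩ := hF.nonempty hk hB
  exact disjoint_left.1 hS (hF.subset hB hx) (hF'.subset hB' hx)

end IsDiagram

theorem isDiagram_empty (k : ℕ) : IsDiagram k ∅ ∅ :=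
  ⟨by simp, by simp, by simp, rfl⟩

def shift (t : ℕ) (F : Finset (Finset ℕ)) : Finset (Finset ℕ) :=
  F.image (image (· + t))

theorem image_add_right_injective (t : ℕ) :
    Function.Injective (image (· + t) : Finset ℕ → Finset ℕ) :=
  image_injective (add_left_injective t)

theorem shift_injective (t : ℕ) : Function.Injective (shift t) :=
  image_injective (image_add_right_injective t)

theorem sup_shift (t : ℕ) (F : Finset (Finset ℕ)) :
    (shift t F).sup id = (F.sup id).image (· + t) := by
  rw [shift, sup_image, sup_eq_biUnion, sup_eq_biUnion, biUnion_image]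
  rfl

theorem isDiagram_shift_iff {k t : ℕ} {S : Finset ℕ} {F : Finset (Finset ℕ)} :
    IsDiagram k (S.image (· + t)) (shift t F) ↔ IsDiagram k S F := by
  have hinj := image_add_right_injective t
  have hmono : StrictMono (· + t) := fun _ _ h => Nat.add_lt_add_right h t
  constructor
  · intro h
    refine ⟨fun B hB => ?_, fun B hB B' hB' hne => ?_, fun B hB B' hB' hne => ?_, ?_⟩
    · rw [← h.card_eq _ (mem_image_of_mem _ hB), card_image_of_injective _ (add_left_injective t)]
    · have := h.pairwiseDisjoint (mem_image_of_mem _ hB) (mem_image_of_mem _ hB') (hinj.ne hne)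
      exact (disjoint_image (add_left_injective t)).1 this
    · rw [← cross_image_iff hmono]
      exact h.not_cross _ (mem_image_of_mem _ hB) _ (mem_image_of_mem _ hB') (hinj.ne hne)
    · exact hinj (by rw [← sup_shift, h.sup_eq])
  · intro h
    refine ⟨?_, fun B hB B' hB' hne => ?_, ?_, by rw [sup_shift, h.sup_eq]⟩
    · simp only [shift, forall_mem_image]
      intro B hB
      rw [card_image_of_injective _ (add_left_injective t), h.card_eq B hB]
    · obtain ⟨C, hC, rfl⟩ := mem_image.1 (mem_coe.1 hB)
      obtain ⟨C', hC', rfl⟩ := mem_image.1 (mem_coe.1 hB')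
      exact (disjoint_image (add_left_injective t)).2
        (h.pairwiseDisjoint hC hC' fun h => hne (by rw [h]))
    · simp only [shift, forall_mem_image]
      intro C hC C' hC' hne
      rw [cross_image_iff hmono]
      exact h.not_cross C hC C' hC' fun h => hne (by rw [h])

theorem exists_shift_eq_of_forall_le {t : ℕ} {E : Finset (Finset ℕ)}
    (hE : ∀ B ∈ E, ∀ x ∈ B, t ≤ x) : ∃ F, shift t F = E := by
  refine ⟨E.image (image (· - t)), ?_⟩
  rw [shift, image_image]
  refine (image_congr fun B hB => ?_).trans image_id
  simp only [Function.comp_apply, image_image, id]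
  refine (image_congr fun x hx => ?_).trans image_id
  simp [Nat.sub_add_cancel (hE B hB x hx)]

theorem IsDiagram.exists_shift_eq {k a b : ℕ} {E : Finset (Finset ℕ)}
    (hE : IsDiagram k (Ico a b) E) (hab : a ≤ b) :
    ∃ G, shift a G = E ∧ IsDiagram k (range (k * G.card)) G ∧ b = a + k * G.card := by
  obtain ⟨G, rfl⟩ := exists_shift_eq_of_forall_le fun B hB x hx => (mem_Ico.1 (hE.subset hB hx)).1
  have hIco : Ico a b = (range (b - a)).image (· + a) := by
    rw [range_eq_Ico, image_add_right_Ico]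
    congr 1 <;> omega
  rw [hIco, isDiagram_shift_iff] at hE
  have hcard : G.card * k = b - a := by rw [hE.card_mul, card_range]
  refine ⟨G, rfl, ?_, by rw [mul_comm]; omega⟩
  rwa [mul_comm, hcard]

def IsShort (k : ℕ) (B : Finset ℕ) : Prop :=
  ∃ i, B = Ico i (i + k)

noncomputable def shortCount (k : ℕ) (F : Finset (Finset ℕ)) : ℕ :=
  #{B ∈ F | IsShort k B}

theorem isShort_image_add_iff {k : ℕ} (hk : 0 < k) (t : ℕ) {B : Finset ℕ} :
    IsShort k (B.image (· + t)) ↔ IsShort k B := by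
  constructor
  · rintro ⟨i, hi⟩
    obtain ⟨x, -, hx⟩ := mem_image.1 (hi ▸ left_mem_Ico.2 (by omega) : i ∈ B.image (· + t))
    refine ⟨x, image_add_right_injective t ?_⟩
    rw [hi, image_add_right_Ico]
    congr 1 <;> omega
  · rintro ⟨i, rfl⟩
    exact ⟨i + t, by rw [image_add_right_Ico, Nat.add_right_comm]⟩

theorem shortCount_shift {k : ℕ} (hk : 0 < k) (t : ℕ) (F : Finset (Finset ℕ)) :
    shortCount k (shift t F) = shortCount k F := by
  rw [shortCount, shift, filter_image, card_image_of_injective _ (image_add_right_injective t)]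
  simp only [shortCount, isShort_image_add_iff hk]

@[simp]
theorem shortCount_empty (k : ℕ) : shortCount k ∅ = 0 := rfl

-- the exponent of the monomial `x ^ #F * y ^ shortCount k F` contributed by `F` to `Tser k`
noncomputable def weight (k : ℕ) (F : Finset (Finset ℕ)) : Fin 2 →₀ ℕ :=
  Finsupp.single 0 F.card + Finsupp.single 1 (shortCount k F)

@[simp]
theorem weight_apply_zero (k : ℕ) (F : Finset (Finset ℕ)) : weight k F 0 = F.card := by
  simp [weight]

@[simp]
theorem weight_apply_one (k : ℕ) (F : Finset (Finset ℕ)) : weight k F 1 = shortCount k F := by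
  simp [weight]

@[simp]
theorem weight_empty (k : ℕ) : weight k ∅ = 0 := by
  simp [weight]

theorem fin_two_finsupp_ext {d d' : Fin 2 →₀ ℕ} (h₀ : d 0 = d' 0) (h₁ : d 1 = d' 1) : d = d' := by
  ext i
  fin_cases i <;> assumption

noncomputable def diagrams (k : ℕ) (d : Fin 2 →₀ ℕ) : Finset (Finset (Finset ℕ)) :=
  {F ∈ (range (k * d 0)).powerset.powerset | IsDiagram k (range (k * F.card)) F ∧ weight k F = d}

theorem mem_diagrams {k : ℕ} {d : Fin 2 →₀ ℕ} {F : Finset (Finset ℕ)} :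
    F ∈ diagrams k d ↔ IsDiagram k (range (k * F.card)) F ∧ weight k F = d := by
  refine mem_filter.trans (and_iff_right_of_imp fun ⟨hF, hw⟩ => ?_)
  rw [mem_powerset]
  intro B hB
  rw [mem_powerset, ← hw, weight_apply_zero]
  exact hF.subset hB

theorem mem_diagrams_iff {k : ℕ} (hk : 0 < k) {d : Fin 2 →₀ ℕ} {F : Finset (Finset ℕ)} :
    F ∈ diagrams k d ↔ IsDiagram k (range (k * d 0)) F ∧ shortCount k F = d 1 := by
  rw [mem_diagrams]
  constructor
  · rintro ⟨hF, rfl⟩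
    simpa using hF
  · rintro ⟨hF, hsc⟩
    have hcard := hF.card_eq_of_range hk
    exact ⟨hcard ▸ hF, fin_two_finsupp_ext (by simp [hcard]) (by simp [hsc])⟩

theorem Tcount_eq_card_diagrams {k : ℕ} (hk : 0 < k) (d : Fin 2 →₀ ℕ) :
    Tcount k (d 0) (d 1) = #(diagrams k d) := by
  rw [Tcount, ← Nat.card_eq_finsetCard]
  refine Nat.card_congr
    { toFun := fun P => ⟨P.1.parts, (mem_diagrams_iff hk).2
        ⟨⟨P.2.1, supIndep_iff_pairwiseDisjoint.1 P.1.supIndep, P.2.2.1, P.1.sup_parts⟩, P.2.2.2⟩⟩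
      invFun := fun F =>
        have hF := (mem_diagrams_iff hk).1 F.2
        ⟨⟨F.1, supIndep_iff_pairwiseDisjoint.2 hF.1.pairwiseDisjoint, hF.1.sup_eq,
          fun h => hk.ne (by simpa using hF.1.card_eq _ h)⟩, hF.1.card_eq, hF.1.not_cross, hF.2⟩
      left_inv := fun P => Subtype.ext (Finpartition.ext rfl)
      right_inv := fun F => rfl }

theorem coeff_Tser {k : ℕ} (hk : 0 < k) (d : Fin 2 →₀ ℕ) :
    MvPowerSeries.coeff d (Tser k) = #(diagrams k d) := by
  rw [← Tcount_eq_card_diagrams hk]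
  rfl

theorem card_diagrams_of_apply_zero {k : ℕ} {d : Fin 2 →₀ ℕ} (hd : d 0 = 0) :
    #(diagrams k d) = if d = 0 then 1 else 0 := by
  have hdiag : diagrams k d = if d = 0 then {∅} else ∅ := by
    ext F
    rw [mem_diagrams]
    constructor
    · rintro ⟨hF, rfl⟩
      rw [weight_apply_zero, card_eq_zero] at hd
      subst hd
      simp
    · split_ifs with h0
      · rw [mem_singleton]
        rintro rfl
        exact ⟨isDiagram_empty k, by simp [h0]⟩
      · simp
  rw [hdiag]
  split_ifs <;> rfl

noncomputable def tuples (k : ℕ) (d : Fin 2 →₀ ℕ) : Finset (Fin k → Finset (Finset ℕ)) :=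
  (finsuppAntidiag univ d).biUnion fun l => Fintype.piFinset fun i => diagrams k (l i)

theorem mem_tuples {k : ℕ} {d : Fin 2 →₀ ℕ} {g : Fin k → Finset (Finset ℕ)} :
    g ∈ tuples k d ↔
      (∀ i, IsDiagram k (range (k * (g i).card)) (g i)) ∧ ∑ i, weight k (g i) = d := by
  simp only [tuples, mem_biUnion, Fintype.mem_piFinset, mem_diagrams, mem_finsuppAntidiag,
    subset_univ, and_true]
  constructor
  · rintro ⟨l, rfl, hl⟩
    exact ⟨fun i => (hl i).1, sum_congr rfl fun i _ => (hl i).2⟩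
  · rintro ⟨hg, rfl⟩
    exact ⟨Finsupp.equivFunOnFinite.symm fun i => weight k (g i), by simp, fun i => ⟨hg i, by simp⟩⟩

theorem card_tuples (k : ℕ) (d : Fin 2 →₀ ℕ) :
    #(tuples k d) = ∑ l ∈ finsuppAntidiag (univ : Finset (Fin k)) d, ∏ i, #(diagrams k (l i)) := by
  rw [tuples, card_biUnion]
  · exact sum_congr rfl fun l _ => Fintype.card_piFinset _
  · intro l _ l' _ hne
    refine disjoint_left.2 fun g hg hg' => hne (Finsupp.ext fun i => ?_)
    rw [Fintype.mem_piFinset] at hg hg'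
    rw [← (mem_diagrams.1 (hg i)).2, (mem_diagrams.1 (hg' i)).2]

theorem coeff_Tser_pow {k : ℕ} (hk : 0 < k) (d : Fin 2 →₀ ℕ) :
    MvPowerSeries.coeff d (Tser k ^ k) = #(tuples k d) := by
  rw [← Fin.prod_const, MvPowerSeries.coeff_prod, card_tuples]
  push_cast
  simp only [coeff_Tser hk]

def gap (f : ℕ → ℕ) (j : ℕ) : Finset ℕ :=
  Ico (f j + 1) (f (j + 1))

section Gap

variable {f : ℕ → ℕ}

theorem mem_gap {j x : ℕ} : x ∈ gap f j ↔ f j < x ∧ x < f (j + 1) := by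
  rw [gap, mem_Ico, Nat.succ_le_iff]

theorem lt_of_mem_gap_of_lt (hf : StrictMono f) {i j x y : ℕ} (hij : i < j) (hx : x ∈ gap f i)
    (hy : y ∈ gap f j) : x < y := by
  have := hf.monotone (show i + 1 ≤ j from hij)
  rw [mem_gap] at hx hy
  omega

theorem disjoint_gap (hf : StrictMono f) {i j : ℕ} (hij : i ≠ j) :
    Disjoint (gap f i) (gap f j) := by
  refine disjoint_left.2 fun x hi hj => ?_
  rcases hij.lt_or_gt with h | h
  · exact (lt_of_mem_gap_of_lt hf h hi hj).false
  · exact (lt_of_mem_gap_of_lt hf h hj hi).false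

theorem apply_notMem_gap (hf : StrictMono f) (i j : ℕ) : f i ∉ gap f j := by
  rw [mem_gap, hf.lt_iff_lt, hf.lt_iff_lt]
  omega

theorem not_cross_of_subset_gap (hf : StrictMono f) {i j : ℕ} (hij : i ≠ j) {B B' : Finset ℕ}
    (hB : B ⊆ gap f i) (hB' : B' ⊆ gap f j) : ¬ Cross B B' := by
  rcases hij.lt_or_gt with h | h
  · exact not_cross_of_forall_lt fun x hx y hy => lt_of_mem_gap_of_lt hf h (hB hx) (hB' hy)
  · rw [cross_comm]
    exact not_cross_of_forall_lt fun x hx y hy => lt_of_mem_gap_of_lt hf h (hB' hx) (hB hy)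

theorem not_cross_image_of_subset_gap (hf : StrictMono f) (s : Finset ℕ) {j : ℕ}
    {B : Finset ℕ} (hB : B ⊆ gap f j) : ¬ Cross (s.image f) B := by
  refine not_cross_of_separated (u := f j) (v := f (j + 1)) (fun y hy => mem_gap.1 (hB hy)) ?_
  simp only [forall_mem_image, hf.le_iff_le]
  intro i _
  omega

theorem exists_eq_or_mem_gap (h0 : f 0 = 0) {K x : ℕ} (hx : x < f K) :
    ∃ j < K, f j = x ∨ x ∈ gap f j := by
  induction K with
  | zero => omega
  | succ K ih =>
    by_cases hxK : x < f K
    · obtain ⟨j, hj, h⟩ := ih hxK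
      exact ⟨j, by omega, h⟩
    · refine ⟨K, by omega, ?_⟩
      rw [mem_gap]
      omega

theorem range_eq_image_union_biUnion_gap (hf : StrictMono f) (h0 : f 0 = 0) (K : ℕ) :
    range (f K) = (range K).image f ∪ (range K).biUnion (gap f) := by
  ext x
  simp only [mem_range, mem_union, mem_image, mem_biUnion]
  constructor
  · intro hx
    obtain ⟨j, hj, rfl | h⟩ := exists_eq_or_mem_gap h0 hx
    · exact Or.inl ⟨j, hj, rfl⟩
    · exact Or.inr ⟨j, hj, h⟩
  · rintro (⟨j, hj, rfl⟩ | ⟨j, hj, hx⟩)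
    · exact hf hj
    · exact (mem_gap.1 hx).2.trans_le (hf.monotone hj)

end Gap

theorem StrictMono.eq_of_image_range_eq {f f' : ℕ → ℕ} (hf : StrictMono f) (hf' : StrictMono f')
    {K : ℕ} (h : (range K).image f = (range K).image f') {j : ℕ} (hj : j < K) : f j = f' j := by
  have hfK : StrictMono fun i : Fin K => f i := hf.comp Fin.val_strictMono
  have hfK' : StrictMono fun i : Fin K => f' i := hf'.comp Fin.val_strictMono
  have hrange : Set.range (fun i : Fin K => f i) = Set.range (fun i : Fin K => f' i) := by
    ext x
    have hx := congrArg (x ∈ ·) h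
    simp only [mem_image, mem_range, eq_iff_iff] at hx
    simp only [Set.mem_range]
    constructor
    · rintro ⟨i, rfl⟩
      obtain ⟨j, hj, hji⟩ := hx.1 ⟨i, i.2, rfl⟩
      exact ⟨⟨j, hj⟩, hji⟩
    · rintro ⟨i, rfl⟩
      obtain ⟨j, hj, hji⟩ := hx.2 ⟨i, i.2, rfl⟩
      exact ⟨⟨j, hj⟩, hji⟩
  exact congrFun ((hfK.range_inj hfK').1 hrange) ⟨j, hj⟩

theorem exists_strictMono_image_range_eq {s : Finset ℕ} {K n : ℕ} (hs : s.card = K)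
    (hsn : s ⊆ range n) : ∃ β : ℕ → ℕ, StrictMono β ∧ (range K).image β = s ∧ β K = n := by
  set e := s.orderEmbOfFin hs
  have he (j : ℕ) (hj : j < K) : e ⟨j, hj⟩ < n := mem_range.1 (hsn (s.orderEmbOfFin_mem hs _))
  -- continuing with `n, n + 1, …` past `K` keeps the sequence strictly monotone on all of `ℕ`
  refine ⟨fun j => if hj : j < K then e ⟨j, hj⟩ else n + (j - K),
    strictMono_nat_of_lt_succ fun j => ?_, ?_, by simp⟩
  · by_cases hj : j + 1 < K
    · simp only [hj, dif_pos, Nat.lt_of_succ_lt hj]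
      exact e.strictMono (Fin.mk_lt_mk.2 (Nat.lt_succ_self j))
    · by_cases hj' : j < K
      · simp only [hj', hj, dif_pos, dif_neg, not_false_eq_true]
        have := he j hj'
        omega
      · simp only [hj', hj, dif_neg, not_false_eq_true]
        omega
  · refine eq_of_subset_of_card_le (fun x hx => ?_) ?_
    · obtain ⟨j, hj, rfl⟩ := mem_image.1 hx
      simp only [dif_pos (mem_range.1 hj)]
      exact s.orderEmbOfFin_mem hs _
    · rw [card_image_of_injOn, card_range, hs]
      intro i hi j hj hij
      simp only [coe_range, Set.mem_Iio] at hi hj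
      simpa [hi, hj] using hij

section Glue

variable (k : ℕ) (G : ℕ → Finset (Finset ℕ))

-- the `j`-th spine vertex, preceded by `j` spine vertices and the `k * #(G i)` vertices of each
-- earlier piece `G i`
def offset (j : ℕ) : ℕ :=
  j + k * ∑ i ∈ range j, (G i).card

def spine : Finset ℕ :=
  (range k).image (offset k G)

noncomputable def glue : Finset (Finset ℕ) :=
  insert (spine k G) ((range k).biUnion fun j => shift (offset k G j + 1) (G j))

variable {k G}

@[simp]
theorem offset_zero : offset k G 0 = 0 := by
  simp [offset]

theorem offset_succ (j : ℕ) : offset k G (j + 1) = offset k G j + 1 + k * (G j).card := by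
  simp only [offset, sum_range_succ]
  ring

variable (k G) in
theorem offset_strictMono : StrictMono (offset k G) :=
  strictMono_nat_of_lt_succ fun j => by rw [offset_succ]; omega

theorem offset_eq_of_succ {β : ℕ → ℕ} (h0 : β 0 = 0)
    (hsucc : ∀ j < k, β (j + 1) = β j + 1 + k * (G j).card) {j : ℕ} (hj : j ≤ k) :
    offset k G j = β j := by
  induction j with
  | zero => rw [offset_zero, h0]
  | succ j ih => rw [offset_succ, ih (by omega), hsucc j (by omega)]

theorem gap_offset (j : ℕ) :
    gap (offset k G) j = (range (k * (G j).card)).image (· + (offset k G j + 1)) := by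
  rw [gap, offset_succ, range_eq_Ico, image_add_right_Ico]
  congr 1 <;> omega

theorem card_spine : (spine k G).card = k :=
  (card_image_of_injective _ (offset_strictMono k G).injective).trans (card_range k)

theorem zero_mem_spine (hk : 0 < k) : 0 ∈ spine k G :=
  mem_image.2 ⟨0, mem_range.2 hk, offset_zero⟩

theorem isShort_spine_iff (hk : 0 < k) : IsShort k (spine k G) ↔ ∀ j < k - 1, G j = ∅ := by
  have hrange : IsShort k (spine k G) ↔ spine k G = range k := by
    refine ⟨fun ⟨i, hi⟩ => ?_, fun h => ⟨0, by rw [h, range_eq_Ico, zero_add]⟩⟩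
    have h0 := hi ▸ zero_mem_spine hk
    rw [mem_Ico] at h0
    rw [hi, range_eq_Ico, show i = 0 by omega, zero_add]
  have hlast : spine k G = range k ↔ offset k G (k - 1) = k - 1 := by
    have hle := (offset_strictMono k G).id_le (k - 1)
    constructor
    · intro h
      have : offset k G (k - 1) < k := by
        rw [← mem_range, ← h]
        exact mem_image_of_mem _ (mem_range.2 (Nat.sub_one_lt_of_lt hk))
      simp only [id] at hle
      omega
    · intro h
      refine eq_of_subset_of_card_le (fun x hx => ?_) (by rw [card_spine, card_range])
      obtain ⟨j, hj, rfl⟩ := mem_image.1 hx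
      have := (offset_strictMono k G).monotone (show j ≤ k - 1 by rw [mem_range] at hj; omega)
      rw [mem_range]
      omega
  rw [hrange, hlast, offset, add_eq_left, mul_eq_zero, or_iff_right hk.ne', sum_eq_zero_iff]
  simp only [mem_range, card_eq_zero]

theorem isDiagram_shift_offset (hG : ∀ j < k, IsDiagram k (range (k * (G j).card)) (G j))
    {j : ℕ} (hj : j < k) :
    IsDiagram k (gap (offset k G) j) (shift (offset k G j + 1) (G j)) := by
  rw [gap_offset]
  exact isDiagram_shift_iff.2 (hG j hj)

theorem isDiagram_glue (hG : ∀ j < k, IsDiagram k (range (k * (G j).card)) (G j)) :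
    IsDiagram k (range (k * (∑ j ∈ range k, (G j).card + 1))) (glue k G) := by
  have hmono := offset_strictMono k G
  have hpiece {j} (hj : j ∈ range k) := isDiagram_shift_offset hG (mem_range.1 hj)
  have hrange : range (k * (∑ j ∈ range k, (G j).card + 1)) =
      spine k G ∪ (range k).biUnion (gap (offset k G)) := by
    rw [spine, ← range_eq_image_union_biUnion_gap hmono offset_zero, offset, mul_add_one, add_comm]
  rw [hrange]
  refine (IsDiagram.biUnion (fun j hj => hpiece hj) (fun i _ j _ hij => disjoint_gap hmono hij)
    fun i hi j hj hij B hB B' hB' => ?_).insert card_spine ?_ fun B hB => ?_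
  · exact not_cross_of_subset_gap hmono hij ((hpiece hi).subset hB) ((hpiece hj).subset hB')
  · refine disjoint_biUnion_right _ _ _ |>.2 fun j _ => disjoint_left.2 fun x hx => ?_
    obtain ⟨i, -, rfl⟩ := mem_image.1 hx
    exact apply_notMem_gap hmono i j
  · obtain ⟨j, hj, hB⟩ := mem_biUnion.1 hB
    exact not_cross_image_of_subset_gap hmono _ ((hpiece hj).subset hB)

theorem card_glue (hk : 0 < k) (hG : ∀ j < k, IsDiagram k (range (k * (G j).card)) (G j)) :
    (glue k G).card = ∑ j ∈ range k, (G j).card + 1 :=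
  (isDiagram_glue hG).card_eq_of_range hk

theorem zero_notMem_of_mem_shift (hG : ∀ j < k, IsDiagram k (range (k * (G j).card)) (G j))
    {j : ℕ} (hj : j < k) {B : Finset ℕ} (hB : B ∈ shift (offset k G j + 1) (G j)) : 0 ∉ B :=
  fun h0 => by simpa using (mem_gap.1 ((isDiagram_shift_offset hG hj).subset hB h0)).1

theorem eq_spine_of_zero_mem (hG : ∀ j < k, IsDiagram k (range (k * (G j).card)) (G j))
    {B : Finset ℕ} (hB : B ∈ glue k G) (h0 : 0 ∈ B) : B = spine k G := by
  rcases mem_insert.1 hB with rfl | hB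
  · rfl
  · obtain ⟨j, hj, hB⟩ := mem_biUnion.1 hB
    exact absurd h0 (zero_notMem_of_mem_shift hG (mem_range.1 hj) hB)

theorem shortCount_glue (hk : 0 < k)
    (hG : ∀ j < k, IsDiagram k (range (k * (G j).card)) (G j)) :
    shortCount k (glue k G) =
      ∑ j ∈ range k, shortCount k (G j) + if ∀ j < k - 1, G j = ∅ then 1 else 0 := by
  have hpieces : #{B ∈ (range k).biUnion (fun j => shift (offset k G j + 1) (G j)) | IsShort k B} =
      ∑ j ∈ range k, shortCount k (G j) := by
    rw [filter_biUnion, card_biUnion fun i hi j hj hij => disjoint_filter_filter <|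
      (isDiagram_shift_offset hG (mem_range.1 hi)).disjoint hk
        (isDiagram_shift_offset hG (mem_range.1 hj)) (disjoint_gap (offset_strictMono k G) hij)]
    exact sum_congr rfl fun j _ => shortCount_shift hk _ _
  have hspine : spine k G ∉ (range k).biUnion fun j => shift (offset k G j + 1) (G j) := by
    intro h
    obtain ⟨j, hj, h⟩ := mem_biUnion.1 h
    exact zero_notMem_of_mem_shift hG (mem_range.1 hj) h (zero_mem_spine hk)
  rw [glue, shortCount, filter_insert]
  by_cases hshort : IsShort k (spine k G)
  · rw [if_pos hshort, if_pos ((isShort_spine_iff hk).1 hshort),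
      card_insert_of_notMem fun h => hspine (mem_filter.1 h).1, hpieces]
  · rw [if_neg hshort, if_neg (mt (isShort_spine_iff hk).2 hshort), hpieces, add_zero]

theorem shift_offset_eq_filter (hk : 0 < k)
    (hG : ∀ j < k, IsDiagram k (range (k * (G j).card)) (G j)) {j : ℕ} (hj : j < k) :
    shift (offset k G j + 1) (G j) = (glue k G).filter (· ⊆ gap (offset k G) j) := by
  ext B
  rw [mem_filter]
  refine ⟨fun hB => ⟨mem_insert_of_mem (mem_biUnion.2 ⟨j, mem_range.2 hj, hB⟩),
    (isDiagram_shift_offset hG hj).subset hB⟩, fun ⟨hB, hBj⟩ => ?_⟩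
  rcases mem_insert.1 hB with rfl | hB
  · simpa using (mem_gap.1 (hBj (zero_mem_spine hk))).1
  · obtain ⟨i, hi, hBi⟩ := mem_biUnion.1 hB
    obtain rfl | hij := eq_or_ne i j
    · exact hBi
    · obtain ⟨x, hx⟩ := (isDiagram_shift_offset hG (mem_range.1 hi)).nonempty hk hBi
      exact absurd (hBj hx) (disjoint_left.1 (disjoint_gap (offset_strictMono k G) hij)
        ((isDiagram_shift_offset hG (mem_range.1 hi)).subset hBi hx))

theorem eq_of_glue_eq (hk : 0 < k) {G' : ℕ → Finset (Finset ℕ)}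
    (hG : ∀ j < k, IsDiagram k (range (k * (G j).card)) (G j))
    (hG' : ∀ j < k, IsDiagram k (range (k * (G' j).card)) (G' j))
    (h : glue k G = glue k G') {j : ℕ} (hj : j < k) : G j = G' j := by
  have hspine : spine k G = spine k G' :=
    eq_spine_of_zero_mem hG' (h ▸ mem_insert_self _ _) (zero_mem_spine hk)
  have hoffset : ∀ i ≤ k, offset k G i = offset k G' i := by
    intro i hi
    rcases hi.lt_or_eq with hi | hi
    · exact (offset_strictMono k G).eq_of_image_range_eq (offset_strictMono k G') hspine hi
    · have hsum : ∑ j ∈ range k, (G j).card + 1 = ∑ j ∈ range k, (G' j).card + 1 := by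
        rw [← card_glue hk hG, ← card_glue hk hG', h]
      rw [hi, offset, offset, Nat.add_right_cancel hsum]
  have hgap : gap (offset k G) j = gap (offset k G') j := by
    rw [gap, gap, hoffset j hj.le, hoffset (j + 1) hj]
  apply shift_injective (offset k G j + 1)
  rw [shift_offset_eq_filter hk hG hj, h, hgap, hoffset j hj.le,
    ← shift_offset_eq_filter hk hG' hj]

end Glue

section Decomposition

variable {k : ℕ} {β : ℕ → ℕ} {D : Finset (Finset ℕ)}

theorem IsDiagram.exists_subset_gap (hk : 0 < k) (hD : IsDiagram k (range (β k)) D)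
    (hβ0 : β 0 = 0) (hspine : (range k).image β ∈ D) {B : Finset ℕ} (hB : B ∈ D)
    (hne : B ≠ (range k).image β) : ∃ j < k, B ⊆ gap β j := by
  have hdisj : Disjoint B ((range k).image β) := hD.pairwiseDisjoint hB hspine hne
  have hBne := hD.nonempty hk hB
  have hx := B.min'_mem hBne
  obtain ⟨j, hj, hjx | hgap⟩ := exists_eq_or_mem_gap hβ0 (mem_range.1 (hD.subset hB hx))
  · exact absurd (mem_image.2 ⟨j, mem_range.2 hj, hjx⟩) (disjoint_left.1 hdisj hx)
  refine ⟨j, hj, fun y hy => mem_gap.2 ⟨(mem_gap.1 hgap).1.trans_le (B.min'_le y hy), ?_⟩⟩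
  by_contra! hy'
  have hyk := mem_range.1 (hD.subset hB hy)
  have hj1 : j + 1 < k := by
    by_contra hj1
    rw [show k = j + 1 by omega] at hyk
    omega
  have hmem : β (j + 1) ∈ (range k).image β := mem_image_of_mem β (mem_range.2 hj1)
  have hlt : β (j + 1) < y := hy'.lt_of_ne fun h => disjoint_left.1 hdisj hy (h ▸ hmem)
  -- `0` and `β (j + 1)` in the spine interleave with `min' B` and `y` in `B`
  refine hD.not_cross _ hspine B hB hne.symm ⟨0, B.min' hBne, β (j + 1), y, ?_,
    (mem_gap.1 hgap).2, hlt, Or.inl ⟨mem_image.2 ⟨0, mem_range.2 hk, hβ0⟩, hmem, hx, hy⟩⟩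
  have := (mem_gap.1 hgap).1
  omega

theorem IsDiagram.isDiagram_filter_subset_gap (hk : 0 < k) (hD : IsDiagram k (range (β k)) D)
    (hβ : StrictMono β) (hβ0 : β 0 = 0) (hspine : (range k).image β ∈ D) {j : ℕ} (hj : j < k) :
    IsDiagram k (gap β j) (D.filter (· ⊆ gap β j)) := by
  refine hD.filter_subset fun x hx => ?_
  have hxk : x ∈ range (β k) := mem_range.2 <|
    (mem_gap.1 hx).2.trans_le (hβ.monotone (show j + 1 ≤ k from hj))
  obtain ⟨B, hB, hxB⟩ := hD.exists_mem hxk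
  have hne : B ≠ (range k).image β := by
    rintro rfl
    obtain ⟨i, -, rfl⟩ := mem_image.1 hxB
    exact apply_notMem_gap hβ i j hx
  obtain ⟨i, -, hBi⟩ := hD.exists_subset_gap hk hβ0 hspine hB hne
  obtain rfl | hij := eq_or_ne i j
  · exact ⟨B, hB, hxB, hBi⟩
  · exact absurd hx (disjoint_left.1 (disjoint_gap hβ hij) (hBi hxB))

theorem insert_image_biUnion_filter_subset_gap (hk : 0 < k)
    (hD : IsDiagram k (range (β k)) D) (hβ0 : β 0 = 0) (hspine : (range k).image β ∈ D) :
    insert ((range k).image β) ((range k).biUnion fun j => D.filter (· ⊆ gap β j)) = D := by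
  ext B
  constructor
  · intro hB
    rcases mem_insert.1 hB with rfl | hB
    · exact hspine
    · obtain ⟨j, -, hB⟩ := mem_biUnion.1 hB
      exact (mem_filter.1 hB).1
  · intro hB
    by_cases hne : B = (range k).image β
    · exact hne ▸ mem_insert_self _ _
    · obtain ⟨j, hj, hBj⟩ := hD.exists_subset_gap hk hβ0 hspine hB hne
      exact mem_insert_of_mem (mem_biUnion.2 ⟨j, mem_range.2 hj, mem_filter.2 ⟨hB, hBj⟩⟩)

end Decomposition

def extendByEmpty {k : ℕ} (g : Fin k → Finset (Finset ℕ)) (j : ℕ) : Finset (Finset ℕ) :=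
  if h : j < k then g ⟨j, h⟩ else ∅

theorem extendByEmpty_of_lt {k : ℕ} (g : Fin k → Finset (Finset ℕ)) {j : ℕ} (hj : j < k) :
    extendByEmpty g j = g ⟨j, hj⟩ :=
  dif_pos hj

theorem extendByEmpty_eq_self {k : ℕ} {G : ℕ → Finset (Finset ℕ)} (h : ∀ j, ¬ j < k → G j = ∅) :
    extendByEmpty (fun i : Fin k => G i) = G := by
  ext1 j
  by_cases hj : j < k
  · exact extendByEmpty_of_lt _ hj
  · rw [h j hj, extendByEmpty, dif_neg hj]

theorem IsDiagram.exists_glue_eq {k m : ℕ} (hk : 0 < k) {D : Finset (Finset ℕ)}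
    (hD : IsDiagram k (range (k * (m + 1))) D) :
    ∃ g : Fin k → Finset (Finset ℕ),
      (∀ i, IsDiagram k (range (k * (g i).card)) (g i)) ∧ glue k (extendByEmpty g) = D := by
  obtain ⟨B₀, hB₀, h0⟩ := hD.exists_mem (mem_range.2 (Nat.mul_pos hk m.succ_pos))
  obtain ⟨β, hβ, rfl, hβk⟩ :=
    exists_strictMono_image_range_eq (hD.card_eq _ hB₀) (hD.subset hB₀)
  rw [← hβk] at hD
  have hβ0 : β 0 = 0 := by
    obtain ⟨j, -, hj⟩ := mem_image.1 h0
    have := hβ.monotone (Nat.zero_le j)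
    omega
  have hpiece (j : ℕ) : ∃ Gj : Finset (Finset ℕ), (j < k →
      shift (β j + 1) Gj = D.filter (· ⊆ gap β j) ∧
        IsDiagram k (range (k * Gj.card)) Gj ∧ β (j + 1) = β j + 1 + k * Gj.card) ∧
      (¬ j < k → Gj = ∅) := by
    by_cases hj : j < k
    · obtain ⟨Gj, h⟩ := (hD.isDiagram_filter_subset_gap hk hβ hβ0 hB₀ hj).exists_shift_eq
        (hβ j.lt_succ_self)
      exact ⟨Gj, fun _ => h, fun h => absurd hj h⟩
    · exact ⟨∅, fun h => absurd h hj, fun _ => rfl⟩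
  choose G hG hGempty using hpiece
  have hoffset {j} (hj : j ≤ k) : offset k G j = β j :=
    offset_eq_of_succ hβ0 (fun j hj => (hG j hj).2.2) hj
  refine ⟨fun i => G i, fun i => (hG i i.2).2.1, ?_⟩
  rw [extendByEmpty_eq_self hGempty]
  have hspine : spine k G = (range k).image β :=
    image_congr fun j hj => hoffset (mem_range.1 hj).le
  have hpieces : ∀ j ∈ range k, shift (offset k G j + 1) (G j) = D.filter (· ⊆ gap β j) :=
    fun j hj => by rw [hoffset (mem_range.1 hj).le, (hG j (mem_range.1 hj)).1]
  rw [glue, hspine, biUnion_congr rfl hpieces]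
  exact insert_image_biUnion_filter_subset_gap hk hD hβ0 hB₀

section Tuples

variable {k : ℕ}

def AllButLastEmpty (g : Fin k → Finset (Finset ℕ)) : Prop :=
  ∀ i : Fin k, (i : ℕ) < k - 1 → g i = ∅

theorem sum_range_extendByEmpty {M : Type*} [AddCommMonoid M] (φ : Finset (Finset ℕ) → M)
    (g : Fin k → Finset (Finset ℕ)) :
    ∑ j ∈ range k, φ (extendByEmpty g j) = ∑ i, φ (g i) := by
  rw [← Fin.sum_univ_eq_sum_range]
  simp only [extendByEmpty_of_lt _ (Fin.is_lt _)]

theorem forall_extendByEmpty_eq_empty_iff (g : Fin k → Finset (Finset ℕ)) :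
    (∀ j < k - 1, extendByEmpty g j = ∅) ↔ AllButLastEmpty g := by
  refine ⟨fun h i hi => ?_, fun h j hj => ?_⟩
  · rw [← h i hi, extendByEmpty_of_lt]
  · rw [extendByEmpty_of_lt g (by omega)]
    exact h _ hj

theorem isDiagram_extendByEmpty {g : Fin k → Finset (Finset ℕ)}
    (hg : ∀ i, IsDiagram k (range (k * (g i).card)) (g i)) :
    ∀ j < k, IsDiagram k (range (k * (extendByEmpty g j).card)) (extendByEmpty g j) :=
  fun j hj => by rw [extendByEmpty_of_lt g hj]; exact hg _

theorem weight_glue_extendByEmpty (hk : 0 < k) {g : Fin k → Finset (Finset ℕ)}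
    (hg : ∀ i, IsDiagram k (range (k * (g i).card)) (g i)) :
    weight k (glue k (extendByEmpty g)) = ∑ i, weight k (g i) + Finsupp.single 0 1 +
      if AllButLastEmpty g then Finsupp.single 1 1 else 0 := by
  have hcard := card_glue hk (isDiagram_extendByEmpty hg)
  have hshort := shortCount_glue hk (isDiagram_extendByEmpty hg)
  simp only [sum_range_extendByEmpty, forall_extendByEmpty_eq_empty_iff] at hcard hshort
  split_ifs at hshort ⊢ <;>
    exact fin_two_finsupp_ext (by simp [hcard]) (by simp [hshort])

theorem card_diagrams_single_add_eq_card (hk : 0 < k) {d : Fin 2 →₀ ℕ}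
    {U : Finset (Fin k → Finset (Finset ℕ))}
    (hU : ∀ g, g ∈ U ↔ (∀ i, IsDiagram k (range (k * (g i).card)) (g i)) ∧
      ∑ i, weight k (g i) + (if AllButLastEmpty g then Finsupp.single 1 1 else 0) = d) :
    #(diagrams k (Finsupp.single 0 1 + d)) = #U := by
  refine (card_nbij (fun g => glue k (extendByEmpty g)) (fun g hg => ?_)
    (fun g hg g' hg' h => ?_) fun D hD => ?_).symm
  · obtain ⟨hg, hw⟩ := (hU g).1 hg
    refine mem_diagrams.2 ⟨card_glue hk (isDiagram_extendByEmpty hg) ▸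
      isDiagram_glue (isDiagram_extendByEmpty hg), ?_⟩
    rw [weight_glue_extendByEmpty hk hg, ← hw]
    abel
  · funext i
    have := eq_of_glue_eq hk (isDiagram_extendByEmpty ((hU g).1 hg).1)
      (isDiagram_extendByEmpty ((hU g').1 hg').1) h i.2
    rwa [extendByEmpty_of_lt, extendByEmpty_of_lt] at this
  · obtain ⟨hD, hw⟩ := mem_diagrams.1 (mem_coe.1 hD)
    have hcard : D.card = d 0 + 1 := by
      simpa [add_comm] using congrArg (· 0) hw
    rw [hcard] at hD
    obtain ⟨g, hg, rfl⟩ := hD.exists_glue_eq hk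
    refine ⟨g, (hU g).2 ⟨hg, add_left_cancel (a := Finsupp.single 0 1) ?_⟩, rfl⟩
    rw [← hw, weight_glue_extendByEmpty hk hg]
    abel

theorem card_diagrams_single_add (hk : 0 < k) (d : Fin 2 →₀ ℕ) :
    #(diagrams k (Finsupp.single 0 1 + d)) = #{g ∈ tuples k d | ¬ AllButLastEmpty g} +
      if Finsupp.single 1 1 ≤ d then #{g ∈ tuples k (d - Finsupp.single 1 1) | AllButLastEmpty g}
      else 0 := by
  rw [card_diagrams_single_add_eq_card hk (U := {g ∈ tuples k d | ¬ AllButLastEmpty g} ∪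
    if Finsupp.single 1 1 ≤ d then {g ∈ tuples k (d - Finsupp.single 1 1) | AllButLastEmpty g}
    else ∅) fun g => ?_]
  · split_ifs
    · exact card_union_of_disjoint
        (disjoint_left.2 fun g hg hg' => (mem_filter.1 hg).2 (mem_filter.1 hg').2)
    · rw [union_empty, add_zero]
  · by_cases hg : AllButLastEmpty g
    · by_cases hd : Finsupp.single 1 1 ≤ d
      · simpa [hd, hg, mem_tuples] using fun _ => eq_tsub_iff_add_eq_of_le hd
      · simpa [hd, hg, mem_tuples] using fun _ (h : _ = d) => hd (h ▸ le_add_self)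
    · by_cases hd : Finsupp.single 1 1 ≤ d <;> simp [hd, hg, mem_tuples]

theorem card_filter_allButLastEmpty (hk : 0 < k) (d : Fin 2 →₀ ℕ) :
    #{g ∈ tuples k d | AllButLastEmpty g} = #(diagrams k d) := by
  set last : Fin k := ⟨k - 1, Nat.sub_one_lt_of_lt hk⟩
  have hlt {i : Fin k} (hi : i ≠ last) : (i : ℕ) < k - 1 := by
    have : (i : ℕ) ≠ k - 1 := fun h => hi (Fin.ext h)
    omega
  have hlast {g : Fin k → Finset (Finset ℕ)} (hg : AllButLastEmpty g) (i : Fin k) (hi : i ≠ last) :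
      g i = ∅ :=
    hg i (hlt hi)
  refine card_nbij (fun g => g last) (fun g hg => ?_) (fun g hg g' hg' h => ?_) fun D hD => ?_
  · obtain ⟨hgt, hP⟩ := mem_filter.1 hg
    obtain ⟨hdiag, hw⟩ := mem_tuples.1 hgt
    refine mem_diagrams.2 ⟨hdiag last, ?_⟩
    rwa [Fintype.sum_eq_single last fun i hi => by rw [hlast hP i hi, weight_empty]] at hw
  · funext i
    by_cases hi : i = last
    · exact hi ▸ h
    · rw [hlast (mem_filter.1 hg).2 i hi, hlast (mem_filter.1 hg').2 i hi]
  · obtain ⟨hD, hw⟩ := mem_diagrams.1 (mem_coe.1 hD)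
    refine ⟨Function.update (fun _ => ∅) last D, mem_filter.2 ⟨mem_tuples.2 ⟨fun i => ?_, ?_⟩,
      fun i hi => Function.update_of_ne (fun h => by simp [h, last] at hi) _ _⟩, by simp⟩
    · by_cases hi : i = last
      · rwa [hi, Function.update_self]
      · simpa [Function.update_of_ne hi] using isDiagram_empty k
    · rwa [Fintype.sum_eq_single last fun i hi => by simp [Function.update_of_ne hi],
        Function.update_self]

theorem card_diagrams_recurrence (hk : 0 < k) (d : Fin 2 →₀ ℕ) :
    #(diagrams k (Finsupp.single 0 1 + d)) + #(diagrams k d) =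
      #(tuples k d) +
        if Finsupp.single 1 1 ≤ d then #(diagrams k (d - Finsupp.single 1 1)) else 0 := by
  rw [card_diagrams_single_add hk, card_filter_allButLastEmpty hk (d - _),
    ← card_filter_allButLastEmpty hk d,
    ← card_filter_add_card_filter_not (s := tuples k d) AllButLastEmpty]
  ring

end Tuples

/-- The functional equation `T(x,y) - 1 = x T(x,y)^k - x(1-y) T(x,y)`. -/
theorem stmt15 (k : ℕ) (hk : 1 ≤ k) :
    Tser k - 1 =
      MvPowerSeries.X 0 * (Tser k) ^ k -
        MvPowerSeries.X 0 * (1 - MvPowerSeries.X 1) * Tser k := by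
  suffices h : Tser k + MvPowerSeries.X 0 * Tser k =
      1 + MvPowerSeries.X 0 * (Tser k ^ k + MvPowerSeries.X 1 * Tser k) by
    linear_combination h
  ext d
  simp only [map_add, MvPowerSeries.coeff_one, MvPowerSeries.X_def,
    MvPowerSeries.coeff_monomial_mul, one_mul, coeff_Tser hk, coeff_Tser_pow hk]
  by_cases hd : Finsupp.single 0 1 ≤ d
  · obtain ⟨d, rfl⟩ := exists_add_of_le hd
    rw [if_pos hd, if_pos hd, add_tsub_cancel_left, if_neg (by simp)]
    exact_mod_cast (card_diagrams_recurrence hk d).trans (by split_ifs <;> simp)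
  · rw [if_neg hd, if_neg hd, card_diagrams_of_apply_zero (by simpa using hd)]
    simp
end
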